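/- arXiv:2410.04706 — 11 statements merged into one kernel-verified Lean document; each statement's English description precedes it below -/
import Mathlib

section
/- Let 0 < ε < 1. For every complex number x in the Stolz region St_ε = {z ∈ ℂ : |z| + (1-ε)|1-z| ≤ 1}, there exists a real number y ∈ [0,1] (viewed as a complex number) such that |x - y| ≤ sqrt(1/(4(1-ε)^2) - 1/4). -/
/-- Cauchy–Schwarz style linear lower bound for the Euclidean norm. -/
lemma cauchy_aux (p q a b : ℝ) (hpq : p ^ 2 + q ^ 2 = 1) :
    p * a + q * |b| ≤ Real.sqrt (a ^ 2 + b ^ 2) := by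
  rcases le_or_gt (p * a + q * |b|) 0 with h | h
  · exact h.trans (Real.sqrt_nonneg _)
  · rw [Real.le_sqrt h.le (by positivity)]
    nlinarith [sq_nonneg (q * a - p * |b|), sq_abs b, sq_nonneg a, sq_nonneg b]

lemma abs_eq_sqrt (z : ℂ) : ‖z‖ = Real.sqrt (z.re ^ 2 + z.im ^ 2) := by
  rw [Complex.norm_def, Complex.normSq_apply]; ring_nf

set_option maxHeartbeats 1600000 in
/-- For `0 < ε < 1` and `x` in the Stolz region `St_ε = {z : |z| + (1-ε)|1-z| ≤ 1}`, there is
`y ∈ [0,1] ⊆ ℂ` with `|x - y| ≤ √(1/(4(1-ε)²) - 1/4)`. -/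
theorem stolz_approx (ε : ℝ) (hε0 : 0 < ε) (hε1 : ε < 1) (x : ℂ)
    (hx : ‖x‖ + (1 - ε) * ‖1 - x‖ ≤ 1) :
    ∃ y : ℝ, y ∈ Set.Icc (0:ℝ) 1 ∧
      ‖x - (y : ℂ)‖ ≤ Real.sqrt (1 / (4 * (1 - ε) ^ 2) - 1 / 4) := by
  set c : ℝ := 1 - ε with hc
  have hc0 : 0 < c := by rw [hc]; linarith
  have hc1 : c < 1 := by rw [hc]; linarith
  clear_value c
  clear hc hε0 hε1
  have hE : (0:ℝ) ≤ 1 / (4 * c ^ 2) - 1 / 4 := by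
    rw [sub_nonneg, div_le_div_iff₀ (by norm_num) (by positivity)]
    nlinarith
  set a : ℝ := x.re with ha'
  set u : ℝ := ‖x‖ with hu'
  set v : ℝ := ‖1 - x‖ with hv'
  have hvnn : 0 ≤ v := norm_nonneg _
  have hunn : 0 ≤ u := norm_nonneg _
  have hrea : (1 - x).re = 1 - a := by simp [ha']
  have hva : 1 - a ≤ v := hrea ▸ Complex.re_le_norm (1 - x)
  have hau : a ≤ u := Complex.re_le_norm x
  have hueq : u = Real.sqrt (a ^ 2 + x.im ^ 2) := by rw [hu', abs_eq_sqrt, ha']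
  have hveq : v = Real.sqrt ((1 - a) ^ 2 + x.im ^ 2) := by
    rw [hv', abs_eq_sqrt, hrea]
    congr 1
    simp
  have him : ‖x - (a : ℂ)‖ = |x.im| := by
    rw [abs_eq_sqrt]
    simp [ha', Real.sqrt_sq_eq_abs]
  have hx0 : ‖x - ((0:ℝ) : ℂ)‖ = u := by rw [hu']; norm_num
  clear_value u v a
  clear hu' hv' ha' hrea
  rcases lt_or_ge a 0 with ha | ha
  · -- Re x < 0 : take y = 0
    have hu : u ≤ 1 - c := by nlinarith
    refine ⟨0, ⟨le_refl _, by norm_num⟩, ?_⟩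
    have h0 : ‖x - ((0:ℝ) : ℂ)‖ ≤ u := hx0.le
    have hkey : (0:ℝ) ≤ (1 - c) * (1 + c * (2 * c - 1) ^ 2) :=
      mul_nonneg (by linarith) (by nlinarith [sq_nonneg (2 * c - 1)])
    have h1 : (1 - c) ^ 2 ≤ 1 / (4 * c ^ 2) - 1 / 4 := by
      rw [le_sub_iff_add_le, le_div_iff₀ (by positivity)]
      nlinarith
    calc ‖x - ((0:ℝ) : ℂ)‖ ≤ u := h0
      _ ≤ 1 - c := hu
      _ ≤ Real.sqrt (1 / (4 * c ^ 2) - 1 / 4) := by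
          rw [Real.le_sqrt (by linarith) hE]; exact h1
  · -- Re x ≥ 0
    have hxle : u ≤ 1 := by nlinarith
    have ha1 : a ≤ 1 := hau.trans hxle
    refine ⟨a, ⟨ha, ha1⟩, ?_⟩
    rw [him]
    set B : ℝ := |x.im| with hB
    have hBnn : 0 ≤ B := abs_nonneg _
    set s : ℝ := Real.sqrt (1 - c ^ 2) with hs
    set t : ℝ := Real.sqrt (1 + c ^ 2) with ht
    have hs2 : s ^ 2 = 1 - c ^ 2 := Real.sq_sqrt (by nlinarith)
    have ht2 : t ^ 2 = 1 + c ^ 2 := Real.sq_sqrt (by nlinarith)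
    have hspos : 0 < s := Real.sqrt_pos.mpr (by nlinarith)
    have htge : c ≤ t := by
      rw [ht, show c = Real.sqrt (c ^ 2) by rw [Real.sqrt_sq hc0.le]]
      exact Real.sqrt_le_sqrt (by nlinarith)
    -- lower bound for |x|
    have h1 : c ^ 2 * a + (s * t) * B ≤ u := by
      rw [hueq, hB]
      exact cauchy_aux (c ^ 2) (s * t) a x.im
        (by linear_combination t ^ 2 * hs2 + (1 - c ^ 2) * ht2)
    -- lower bound for |1 - x|
    have h2 : c * (1 - a) + s * B ≤ v := by
      rw [hveq, hB]
      exact cauchy_aux c s (1 - a) x.im (by linear_combination hs2)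
    clear_value s t B
    have h2' : c * (c * (1 - a) + s * B) ≤ c * v :=
      mul_le_mul_of_nonneg_left h2 hc0.le
    have hkey : s * ((t + c) * B) ≤ s * s := by linarith [h1, h2', hx, hs2]
    have h4 : (t + c) * B ≤ s := (mul_le_mul_iff_right₀ hspos).mp hkey
    have htcB : 2 * c * B ≤ (t + c) * B := by
      nlinarith [mul_nonneg (sub_nonneg.2 htge) hBnn]
    have hb : 2 * c * B ≤ s := htcB.trans h4
    have hb2 : (2 * c * B) * (2 * c * B) ≤ s * s :=
      mul_le_mul hb hb (by positivity) hspos.le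
    rw [Real.le_sqrt hBnn hE]
    have hEeq : (1 : ℝ) / (4 * c ^ 2) - 1 / 4 = s ^ 2 / (4 * c ^ 2) := by
      rw [hs2]; field_simp
    rw [hEeq, le_div_iff₀ (by positivity)]
    linarith [hb2]
end

section
/- Let M = 1/(2(1-ε)) and m = sqrt(M^2 - 1/4) for 0 < ε < 1. The ellipse {z ∈ ℂ : |z| + |z-1| ≤ 2M} with foci 0 and 1 is contained in the closed convex hull of the union of the two closed balls of radius m centered at 0 and at 1. -/
lemma ellipse_aux (M c : ℝ) (hM : 1 / 2 < M) (hc0 : 0 ≤ c)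
    (h : 4 * M * c ≤ 4 * M ^ 2 - 1) : c ^ 2 ≤ M ^ 2 - 1 / 4 := by
  have hM0 : (0:ℝ) < M := by linarith
  have h0 : 0 ≤ 4 * M * c := by positivity
  have h2 : (4 * M * c) ^ 2 ≤ (4 * M ^ 2 - 1) ^ 2 := pow_le_pow_left₀ h0 h 2
  have h3 : 16 * M ^ 2 * c ^ 2 ≤ 4 * M ^ 2 * (4 * M ^ 2 - 1) := by nlinarith
  have hM2 : 0 < M ^ 2 := by positivity
  nlinarith [h3, hM2]


/-- With `M = 1/(2(1-ε))` and `m = √(M² - 1/4)` for `0 < ε < 1`, the ellipse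
`{z : |z| + |z-1| ≤ 2M}` is contained in the closed convex hull of the union of the closed
balls of radius `m` centered at `0` and `1`. -/
theorem ellipse_subset_closedConvexHull (ε : ℝ) (hε0 : 0 < ε) (hε1 : ε < 1) :
    {z : ℂ | ‖z‖ + ‖z - 1‖ ≤ 2 * (1 / (2 * (1 - ε)))} ⊆
      closure (convexHull ℝ
        (Metric.closedBall (0:ℂ) (Real.sqrt ((1 / (2 * (1 - ε))) ^ 2 - 1 / 4)) ∪
         Metric.closedBall (1:ℂ) (Real.sqrt ((1 / (2 * (1 - ε))) ^ 2 - 1 / 4)))) := by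
  intro z hz
  apply subset_closure
  set M : ℝ := 1 / (2 * (1 - ε)) with hMdef
  set m : ℝ := Real.sqrt (M ^ 2 - 1 / 4) with hmdef
  have h1ε : 0 < 1 - ε := by linarith
  have hM : 1 / 2 < M := by
    rw [hMdef]
    rw [div_lt_div_iff₀ (by norm_num) (by linarith)]
    nlinarith
  have hM0 : 0 < M := by linarith
  set a : ℝ := ‖z‖ with hadef
  set b : ℝ := ‖z - 1‖ with hbdef
  set x : ℝ := z.re with hxdef
  set y : ℝ := z.im with hydef
  have ha0 : 0 ≤ a := norm_nonneg z
  have hb0 : 0 ≤ b := norm_nonneg _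
  have ha2 : a ^ 2 = x ^ 2 + y ^ 2 := by
    rw [hadef, Complex.sq_norm, Complex.normSq_apply]; ring
  have hb2 : b ^ 2 = (x - 1) ^ 2 + y ^ 2 := by
    rw [hbdef, Complex.sq_norm, Complex.normSq_apply]
    simp [Complex.sub_re, Complex.sub_im]
    ring
  have hab : a + b ≤ 2 * M := hz
  -- key bound used in all cases
  have hbsq : b ^ 2 ≤ (2 * M - a) ^ 2 := by
    have h1 : b ≤ 2 * M - a := by linarith
    nlinarith
  have hasq : a ^ 2 ≤ (2 * M - b) ^ 2 := by
    have h1 : a ≤ 2 * M - b := by linarith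
    nlinarith
  have hm2 : m ^ 2 = M ^ 2 - 1 / 4 := by
    rw [hmdef, sq, Real.mul_self_sqrt (by nlinarith)]
  rcases le_or_gt x 0 with hx0 | hx0
  · -- z is in the ball centered at 0
    apply subset_convexHull
    apply Set.mem_union_left
    rw [Metric.mem_closedBall]
    have hdist : dist z 0 = a := by simp [hadef]
    rw [hdist]
    have hbsq' : b ^ 2 ≤ 4 * M ^ 2 - 4 * M * a + a ^ 2 := by
      calc b ^ 2 ≤ (2 * M - a) ^ 2 := hbsq
      _ = 4 * M ^ 2 - 4 * M * a + a ^ 2 := by ring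
    have hb2' : b ^ 2 = x ^ 2 - 2 * x + 1 + y ^ 2 := by rw [hb2]; ring
    have h4 : 4 * M * a ≤ 4 * M ^ 2 - 1 := by linarith
    have haM : a ^ 2 ≤ M ^ 2 - 1 / 4 := ellipse_aux M a hM ha0 h4
    calc a = Real.sqrt (a ^ 2) := by rw [Real.sqrt_sq ha0]
    _ ≤ m := Real.sqrt_le_sqrt haM
  rcases le_or_gt 1 x with hx1 | hx1
  · -- z is in the ball centered at 1
    apply subset_convexHull
    apply Set.mem_union_right
    rw [Metric.mem_closedBall]
    have hdist : dist z 1 = b := by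
      rw [hbdef, Complex.dist_eq]
    rw [hdist]
    have hasq' : a ^ 2 ≤ 4 * M ^ 2 - 4 * M * b + b ^ 2 := by
      calc a ^ 2 ≤ (2 * M - b) ^ 2 := hasq
      _ = 4 * M ^ 2 - 4 * M * b + b ^ 2 := by ring
    have hb2' : b ^ 2 = x ^ 2 - 2 * x + 1 + y ^ 2 := by rw [hb2]; ring
    have h4 : 4 * M * b ≤ 4 * M ^ 2 - 1 := by linarith
    have hbM : b ^ 2 ≤ M ^ 2 - 1 / 4 := ellipse_aux M b hM hb0 h4
    calc b = Real.sqrt (b ^ 2) := by rw [Real.sqrt_sq hb0]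
    _ ≤ m := Real.sqrt_le_sqrt hbM
  · -- middle strip: z is on the segment from y*I to 1 + y*I
    have hbsq' : b ^ 2 ≤ 4 * M ^ 2 - 4 * M * a + a ^ 2 := by
      calc b ^ 2 ≤ (2 * M - a) ^ 2 := hbsq
      _ = 4 * M ^ 2 - 4 * M * a + a ^ 2 := by ring
    have hb2' : b ^ 2 = x ^ 2 - 2 * x + 1 + y ^ 2 := by rw [hb2]; ring
    have h4 : 4 * M * a ≤ 4 * M ^ 2 + 2 * x - 1 := by linarith
    have h40 : 0 ≤ 4 * M * a := by positivity
    have h5 : (4 * M * a) ^ 2 ≤ (4 * M ^ 2 + 2 * x - 1) ^ 2 := by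
      have h41 : 0 ≤ 4 * M ^ 2 + 2 * x - 1 := le_trans h40 h4
      exact pow_le_pow_left₀ h40 h4 2
    have hM4 : 0 < 4 * M ^ 2 - 1 := by nlinarith
    have h5' : 16 * M ^ 2 * (x ^ 2 + y ^ 2) ≤ (4 * M ^ 2 + 2 * x - 1) ^ 2 := by
      calc 16 * M ^ 2 * (x ^ 2 + y ^ 2) = (4 * M * a) ^ 2 := by rw [← ha2]; ring
      _ ≤ _ := h5
    have hy2 : y ^ 2 ≤ M ^ 2 - 1 / 4 := by
      have key : 16 * M ^ 2 * (y ^ 2 - (M ^ 2 - 1 / 4)) ≤ (2 * x - 1) ^ 2 * (1 - 4 * M ^ 2) := by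
        calc 16 * M ^ 2 * (y ^ 2 - (M ^ 2 - 1 / 4))
            ≤ (4 * M ^ 2 + 2 * x - 1) ^ 2 - 16 * M ^ 2 * x ^ 2
              - 16 * M ^ 2 * (M ^ 2 - 1 / 4) := by linarith [h5']
        _ = (2 * x - 1) ^ 2 * (1 - 4 * M ^ 2) := by ring
      have k2 : (2 * x - 1) ^ 2 * (1 - 4 * M ^ 2) ≤ 0 := by
        apply mul_nonpos_of_nonneg_of_nonpos (sq_nonneg _)
        linarith
      have k3 : 0 < 16 * M ^ 2 := by positivity
      have hd : 16 * M ^ 2 * (y ^ 2 - (M ^ 2 - 1 / 4)) ≤ 16 * M ^ 2 * 0 := by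
        rw [mul_zero]; linarith [key, k2]
      have := le_of_mul_le_mul_left hd k3
      linarith
    have hym : |y| ≤ m := by
      calc |y| = Real.sqrt (y ^ 2) := (Real.sqrt_sq_eq_abs y).symm
      _ ≤ m := Real.sqrt_le_sqrt hy2
    have hu : ((y : ℂ) * Complex.I) ∈
        Metric.closedBall (0:ℂ) m ∪ Metric.closedBall (1:ℂ) m := by
      apply Set.mem_union_left
      rw [Metric.mem_closedBall, dist_zero_right]
      simpa using hym
    have hv : ((1 : ℂ) + (y : ℂ) * Complex.I) ∈
        Metric.closedBall (0:ℂ) m ∪ Metric.closedBall (1:ℂ) m := by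
      apply Set.mem_union_right
      rw [Metric.mem_closedBall, Complex.dist_eq]
      simpa using hym
    apply segment_subset_convexHull hu hv
    refine ⟨1 - x, x, by linarith, by linarith, by ring, ?_⟩
    rw [Complex.real_smul, Complex.real_smul]
    push_cast
    have : ((1 : ℂ) - x) * (y * Complex.I) + x * (1 + y * Complex.I)
        = x + y * Complex.I := by ring
    rw [this, hxdef, hydef, Complex.re_add_im]
end

section
/- In a complex Banach space X, a point x on the unit sphere is a ∇ point if and only if it is a Daugavet point. -/
open Metric Set Filter MeasureTheory

section Defs
variable (𝕜 : Type*) [RCLike 𝕜] {X : Type*} [NormedAddCommGroup X] [NormedSpace 𝕜 X]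

/-- A slice of the closed unit ball of `X` determined by a norm-one functional and `α > 0`. -/
def IsSlice (S : Set X) : Prop :=
  ∃ (f : X →L[𝕜] 𝕜) (α : ℝ), ‖f‖ = 1 ∧ 0 < α ∧
    S = {y | y ∈ closedBall (0:X) 1 ∧ 1 - α < RCLike.re (f y)}

/-- A convex combination of slices of the closed unit ball of `X`. -/
def IsCCS (C : Set X) : Prop :=
  ∃ (n : ℕ) (lam : Fin n → ℝ) (S : Fin n → Set X), 0 < n ∧ (∀ i, 0 < lam i) ∧
    (∑ i, lam i) = 1 ∧ (∀ i, IsSlice 𝕜 (S i)) ∧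
    C = {x | ∃ y : Fin n → X, (∀ i, y i ∈ S i) ∧ x = ∑ i, (lam i : 𝕜) • y i}

/-- A set is weakly open if it is open in the weak topology on `X`. -/
def WeaklyOpen (W : Set X) : Prop := IsOpen (show Set (WeakSpace 𝕜 X) from W)

def DaugavetPt (x : X) : Prop :=
  ‖x‖ = 1 ∧ ∀ S : Set X, IsSlice 𝕜 S → sSup ((fun y => ‖x - y‖) '' S) = 2

def NablaPt (x : X) : Prop :=
  ‖x‖ = 1 ∧ ∀ S : Set X, IsSlice 𝕜 S → x ∉ S → sSup ((fun y => ‖x - y‖) '' S) = 2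

def DeltaPt (x : X) : Prop :=
  ‖x‖ = 1 ∧ ∀ S : Set X, IsSlice 𝕜 S → x ∈ S → sSup ((fun y => ‖x - y‖) '' S) = 2

def CcsDaugavetPt (x : X) : Prop :=
  ‖x‖ = 1 ∧ ∀ C : Set X, IsCCS 𝕜 C → sSup ((fun y => ‖x - y‖) '' C) = 2

def CcsDeltaPt (x : X) : Prop :=
  ‖x‖ = 1 ∧ ∀ C : Set X, IsCCS 𝕜 C → x ∈ C → sSup ((fun y => ‖x - y‖) '' C) = 2

def SuperDaugavetPt (x : X) : Prop :=
  ‖x‖ = 1 ∧ ∀ W : Set X, WeaklyOpen 𝕜 W → (W ∩ closedBall 0 1).Nonempty →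
    sSup ((fun y => ‖x - y‖) '' (W ∩ closedBall 0 1)) = 2

def SuperDeltaPt (x : X) : Prop :=
  ‖x‖ = 1 ∧ ∀ W : Set X, WeaklyOpen 𝕜 W → x ∈ W ∩ closedBall 0 1 →
    sSup ((fun y => ‖x - y‖) '' (W ∩ closedBall 0 1)) = 2

def DentingPt (x : X) : Prop :=
  ‖x‖ = 1 ∧ ∀ ε > 0, ∃ S : Set X, IsSlice 𝕜 S ∧ x ∈ S ∧ Metric.diam S < ε

/-- `x` is a `Δ_p` point: for every slice `S(f, α)` containing `x` and every `ε > 0`, the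
enlarged slice `S(f, pα)` contains a point at distance at least `2 - ε` from `x`. -/
def DeltaPPt (p : ℝ) (x : X) : Prop :=
  ‖x‖ = 1 ∧ ∀ (f : X →L[𝕜] 𝕜) (α ε : ℝ), ‖f‖ = 1 → 0 < α → 0 < ε →
    (x ∈ closedBall (0:X) 1 ∧ 1 - α < RCLike.re (f x)) →
    ∃ u, u ∈ closedBall (0:X) 1 ∧ 1 - p * α < RCLike.re (f u) ∧ 2 - ε ≤ ‖x - u‖

/-- A measure-theoretic atom for `μ`. -/
def MeasAtom {Ω : Type*} [MeasurableSpace Ω] (μ : Measure Ω) (A : Set Ω) : Prop :=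
  MeasurableSet A ∧ 0 < μ A ∧
    ∀ B ⊆ A, MeasurableSet B → μ B = 0 ∨ μ (A \ B) = 0

end Defs

private lemma key_ineq (α δ s wr wi : ℝ) (hδ0 : 0 < δ) (hδα : δ ≤ α / 3) (hδh : δ ≤ 1 / 2)
    (hs0 : 0 ≤ s) (hs2 : s ^ 2 = 2 * δ - δ ^ 2) (hwrwi : wr ^ 2 + wi ^ 2 ≤ 1)
    (ha2 : 1 - δ / 2 < (1 - δ) * wr - s * wi) : 1 - α < wr := by
  have hunit : (1 - δ) ^ 2 + s ^ 2 = 1 := by rw [hs2]; ring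
  have hab1 : ((1 - δ) * wr - s * wi) ^ 2 + ((1 - δ) * wi + s * wr) ^ 2 ≤ 1 := by
    have hid : ((1 - δ) * wr - s * wi) ^ 2 + ((1 - δ) * wi + s * wr) ^ 2
        = (wr ^ 2 + wi ^ 2) * ((1 - δ) ^ 2 + s ^ 2) := by ring
    rw [hid, hunit, mul_one]; exact hwrwi
  have hwr : wr = (1 - δ) * ((1 - δ) * wr - s * wi) + s * ((1 - δ) * wi + s * wr) := by
    linear_combination (-wr) * hs2
  set a : ℝ := (1 - δ) * wr - s * wi with hadef
  set b : ℝ := (1 - δ) * wi + s * wr with hbdef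
  clear_value a b
  clear hadef hbdef
  have haq : (1 - δ / 2) ^ 2 ≤ a ^ 2 := by nlinarith
  have hb2 : b ^ 2 ≤ δ := by nlinarith
  have hsb2 : (s * b) ^ 2 ≤ 2 * δ ^ 2 := by
    nlinarith [mul_le_mul_of_nonneg_left hb2 (sq_nonneg s), mul_pos (mul_pos hδ0 hδ0) hδ0]
  have hsb : -(3 / 2 * δ) ≤ s * b := by
    nlinarith [sq_nonneg (s * b + 3 / 2 * δ), mul_pos hδ0 hδ0]
  rw [hwr]
  nlinarith [mul_pos (show (0:ℝ) < 1 - δ by linarith)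
    (show (0:ℝ) < a - (1 - δ / 2) by linarith)]

/-- If some slice `T` avoiding `x` is contained in `S ⊆ B_X`, then the `∇` property of `x`
forces `sSup (‖x - ·‖ '' S) = 2`. -/
private lemma aux_sSup {X : Type*} [NormedAddCommGroup X] [NormedSpace ℂ X]
    (x : X) (hx : ‖x‖ = 1)
    (hN : ∀ S : Set X, IsSlice ℂ S → x ∉ S → sSup ((fun y => ‖x - y‖) '' S) = 2)
    (S T : Set X) (hT : IsSlice ℂ T) (hxT : x ∉ T) (hTS : T ⊆ S)
    (hSb : S ⊆ closedBall (0:X) 1) :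
    sSup ((fun y => ‖x - y‖) '' S) = 2 := by
  have h2 := hN T hT hxT
  have hub : ∀ z ∈ (fun y => ‖x - y‖) '' S, z ≤ 2 := by
    rintro z ⟨y, hy, rfl⟩
    have hy1 : ‖y‖ ≤ 1 := mem_closedBall_zero_iff.mp (hSb hy)
    calc ‖x - y‖ ≤ ‖x‖ + ‖y‖ := norm_sub_le _ _
      _ ≤ 2 := by rw [hx]; linarith
  have hTne : ((fun y => ‖x - y‖) '' T).Nonempty := by
    by_contra h
    rw [Set.not_nonempty_iff_eq_empty] at h
    rw [h, Real.sSup_empty] at h2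
    norm_num at h2
  refine le_antisymm (Real.sSup_le hub (by norm_num)) ?_
  calc (2:ℝ) = sSup ((fun y => ‖x - y‖) '' T) := h2.symm
    _ ≤ sSup ((fun y => ‖x - y‖) '' S) :=
      csSup_le_csSup ⟨2, fun z hz => hub z hz⟩ hTne (Set.image_mono hTS)

/-- In a complex Banach space, a unit-sphere point is a `∇` point iff it is a Daugavet point. -/
theorem nabla_iff_daugavet_complex {X : Type*} [NormedAddCommGroup X] [NormedSpace ℂ X]
    [CompleteSpace X] (x : X) (hx : ‖x‖ = 1) :
    NablaPt ℂ x ↔ DaugavetPt ℂ x := by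
  constructor
  · rintro ⟨hx1, hN⟩
    refine ⟨hx1, ?_⟩
    rintro S ⟨f, α, hf, hα, rfl⟩
    have hSb : {y | y ∈ closedBall (0:X) 1 ∧ 1 - α < RCLike.re (f y)} ⊆ closedBall (0:X) 1 :=
      fun y hy => hy.1
    have hfx : ‖f x‖ ≤ 1 := by
      calc ‖f x‖ ≤ ‖f‖ * ‖x‖ := f.le_opNorm x
        _ = 1 := by rw [hf, hx1]; ring
    have hle : (f x).re ≤ 1 := le_trans (Complex.re_le_norm _) (by exact hfx)
    by_cases hre : (f x).re < 1
    · -- shrink the slice so that it misses `x`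
      have hα'0 : 0 < min α (1 - (f x).re) := lt_min hα (by linarith)
      refine aux_sSup x hx1 hN _ _ ⟨f, min α (1 - (f x).re), hf, hα'0, rfl⟩ ?_ ?_ hSb
      · intro hxm
        have h2 := hxm.2
        simp only [RCLike.re_to_complex] at h2
        have h3 : min α (1 - (f x).re) ≤ 1 - (f x).re := min_le_right _ _
        linarith
      · intro y hy
        refine ⟨hy.1, ?_⟩
        have h2 := hy.2
        have h3 : min α (1 - (f x).re) ≤ α := min_le_left _ _
        simp only [RCLike.re_to_complex] at h2 ⊢
        linarith
    · -- here `f x = 1`: rotate the functional slightly, producing a slice avoiding `x`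
      have hre1 : (f x).re = 1 := le_antisymm hle (not_lt.mp hre)
      have him : (f x).im = 0 := by
        have habs : ‖f x‖ ≤ 1 := by exact hfx
        have h1 : (f x).re * (f x).re + (f x).im * (f x).im ≤ 1 := by
          have h2 := Complex.sq_norm (f x)
          rw [Complex.normSq_apply] at h2
          nlinarith [norm_nonneg (f x)]
        nlinarith
      obtain ⟨δ, hδ0, hδα, hδh⟩ : ∃ δ : ℝ, 0 < δ ∧ δ ≤ α / 3 ∧ δ ≤ 1 / 2 :=
        ⟨min (α / 3) (1 / 2), lt_min (by linarith) (by norm_num), min_le_left _ _,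
          min_le_right _ _⟩
      obtain ⟨s, hs0, hs2⟩ : ∃ s : ℝ, 0 ≤ s ∧ s ^ 2 = 2 * δ - δ ^ 2 :=
        ⟨Real.sqrt (2 * δ - δ ^ 2), Real.sqrt_nonneg _, Real.sq_sqrt (by nlinarith)⟩
      set θ : ℂ := ⟨1 - δ, s⟩ with hθdef
      have hθre : θ.re = 1 - δ := rfl
      have hθim : θ.im = s := rfl
      have hθnormSq : Complex.normSq θ = 1 := by
        rw [hθdef, Complex.normSq_mk]; nlinarith
      have hθnorm : ‖θ‖ = 1 := by
        have h := Complex.sq_norm θ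
        rw [hθnormSq] at h
        nlinarith [norm_nonneg θ]
      have hg : ‖θ • f‖ = 1 := by rw [norm_smul θ f, hθnorm, hf]; ring
      refine aux_sSup x hx1 hN _ _ ⟨θ • f, δ / 2, hg, by linarith, rfl⟩ ?_ ?_ hSb
      · intro hxm
        have h2 := hxm.2
        have hval : (θ • f) x = θ * f x := rfl
        simp only [RCLike.re_to_complex, hval, Complex.mul_re, hθre, hθim, hre1, him] at h2
        linarith
      · rintro y ⟨hy1, hy2⟩
        refine ⟨hy1, ?_⟩
        have hyn : ‖y‖ ≤ 1 := mem_closedBall_zero_iff.mp hy1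
        have hfy : ‖f y‖ ≤ 1 := by
          calc ‖f y‖ ≤ ‖f‖ * ‖y‖ := f.le_opNorm y
            _ ≤ 1 := by rw [hf]; linarith
        have hval : (θ • f) y = θ * f y := rfl
        simp only [RCLike.re_to_complex, hval, Complex.mul_re, hθre, hθim] at hy2
        simp only [RCLike.re_to_complex]
        have hwrwi : (f y).re ^ 2 + (f y).im ^ 2 ≤ 1 := by
          have habs : ‖f y‖ ≤ 1 := by exact hfy
          have h2 := Complex.sq_norm (f y)
          rw [Complex.normSq_apply] at h2
          nlinarith [norm_nonneg (f y)]
        exact key_ineq α δ s (f y).re (f y).im hδ0 hδα hδh hs0 hs2 hwrwi hy2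
  · rintro ⟨hx1, hD⟩
    exact ⟨hx1, fun S hS _ => hD S hS⟩
end

section
/- Let X and Y be Banach spaces and suppose x ∈ S_X is a denting point of the unit ball of X. Then for every ε > 0, the space Z = X ⊕₁ Y (the direct sum with the ℓ₁-norm) admits a convex combination of slices of its unit ball containing the point (0,0) and having diameter at most 2ε. In particular, Z contains no ccs-Daugavet points. -/
open Metric Set Filter MeasureTheory

section AuxDenting


variable {𝕜 : Type*} [RCLike 𝕜] {X Y : Type*}
    [NormedAddCommGroup X] [NormedSpace 𝕜 X]
    [NormedAddCommGroup Y] [NormedSpace 𝕜 Y]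

lemma l1_norm_eq' (z : WithLp 1 (X × Y)) : ‖z‖ = ‖z.fst‖ + ‖z.snd‖ := by
  rw [WithLp.prod_norm_eq_add (by norm_num)]; norm_num

lemma key_lemma (x : X) (hx : DentingPt 𝕜 x) {ε : ℝ} (hε : 0 < ε) :
    ∃ C : Set (WithLp 1 (X × Y)), IsCCS 𝕜 C ∧ (0 : WithLp 1 (X × Y)) ∈ C ∧
      ∀ a ∈ C, ∀ b ∈ C, dist a b ≤ 2 * ε := by
  obtain ⟨hx1, hden⟩ := hx
  obtain ⟨S, hSslice, hxS, hSdiam⟩ := hden (ε/4) (by positivity)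
  obtain ⟨f, α, hf, hα, hSeq⟩ := hSslice
  have hSsub : S ⊆ closedBall (0:X) 1 := by rw [hSeq]; exact fun y hy => hy.1
  have hSbdd : Bornology.IsBounded S := (Metric.isBounded_closedBall).subset hSsub
  -- the point x is in the slice
  have hxmem : x ∈ closedBall (0:X) 1 ∧ 1 - α < RCLike.re (f x) := by rwa [hSeq] at hxS
  set t := RCLike.re (f x) with ht_def
  -- find a point u in the slice with large re (f u)
  set δ : ℝ := min α (min (ε/4) (1/2)) with hδ_def
  have hδpos : 0 < δ := by positivity
  have hδα : δ ≤ α := min_le_left _ _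
  have hδε : δ ≤ ε/4 := le_trans (min_le_right _ _) (min_le_left _ _)
  have hδhalf : δ ≤ 1/2 := le_trans (min_le_right _ _) (min_le_right _ _)
  obtain ⟨u₀, hu₀1, hu₀2⟩ := f.exists_lt_apply_of_lt_opNorm (r := 1 - δ) (by rw [hf]; linarith)
  have hfu₀ : f u₀ ≠ 0 := by
    intro h; rw [h, norm_zero] at hu₀2; linarith
  have hfu₀n : ‖f u₀‖ ≠ 0 := norm_ne_zero_iff.mpr hfu₀
  set c : 𝕜 := (starRingEnd 𝕜) (f u₀) / (‖f u₀‖ : 𝕜)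
  set u : X := c • u₀ with hu_def
  have hfu : f u = (‖f u₀‖ : 𝕜) := by
    rw [hu_def, _root_.map_smul, smul_eq_mul]
    show (starRingEnd 𝕜) (f u₀) / (‖f u₀‖ : 𝕜) * f u₀ = _
    rw [div_mul_eq_mul_div, RCLike.conj_mul]
    rw [sq, mul_div_assoc, div_self (by exact_mod_cast hfu₀n), mul_one]
  have hre_u : RCLike.re (f u) = ‖f u₀‖ := by rw [hfu, RCLike.ofReal_re]
  have hcnorm : ‖c‖ = 1 := by
    simp only [c, norm_div, RCLike.norm_conj, RCLike.norm_ofReal, abs_norm]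
    field_simp
  have hu_norm : ‖u‖ ≤ 1 := by
    rw [hu_def, norm_smul, hcnorm, one_mul]; exact hu₀1.le
  have huS : u ∈ S := by
    rw [hSeq]
    exact ⟨by simpa [mem_closedBall, dist_eq_norm] using hu_norm, by rw [hre_u]; linarith⟩
  -- hence re (f x) is large
  have hxu : ‖x - u‖ < ε/4 := by
    have := Metric.dist_le_diam_of_mem hSbdd hxS huS
    rw [dist_eq_norm] at this; linarith
  have ht : 1 - ε/2 < t := by
    have h1 : RCLike.re (f x) = RCLike.re (f u) + RCLike.re (f (x - u)) := by
      rw [map_sub, map_sub]; ring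
    have h2 : RCLike.re (f (x - u)) ≥ -‖x - u‖ := by
      have := (RCLike.re_le_norm (-(f (x-u)))).trans_eq (norm_neg _)
      have h3 : ‖f (x - u)‖ ≤ ‖x - u‖ := by
        calc ‖f (x-u)‖ ≤ ‖f‖ * ‖x-u‖ := f.le_opNorm _
        _ = ‖x-u‖ := by rw [hf, one_mul]
      simp only [map_neg, neg_le] at this
      linarith
    rw [ht_def, h1, hre_u]; linarith
  set β : ℝ := min α (ε/2) with hβ_def
  have hβpos : 0 < β := by positivity
  have hβα : β ≤ α := min_le_left _ _
  have hβε : β ≤ ε/2 := min_le_right _ _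
  have hβt : 1 - β < t := by
    rcases le_total α (ε/2) with h | h
    · rw [hβ_def, min_eq_left h]; exact hxmem.2
    · rw [hβ_def, min_eq_right h]; linarith
  -- the functional on the l1 sum
  set g : WithLp 1 (X × Y) →L[𝕜] 𝕜 :=
    f.comp ((ContinuousLinearMap.fst 𝕜 X Y).comp
      (WithLp.prodContinuousLinearEquiv 1 𝕜 X Y).toContinuousLinearMap) with hg_def
  have hg_apply : ∀ z : WithLp 1 (X × Y), g z = f z.fst := fun z => rfl
  have hgnorm : ‖g‖ = 1 := by
    apply le_antisymm
    · apply ContinuousLinearMap.opNorm_le_bound _ zero_le_one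
      intro z
      rw [hg_apply, one_mul, l1_norm_eq']
      calc ‖f z.fst‖ ≤ ‖f‖ * ‖z.fst‖ := f.le_opNorm _
        _ = ‖z.fst‖ := by rw [hf, one_mul]
        _ ≤ ‖z.fst‖ + ‖z.snd‖ := by linarith [norm_nonneg z.snd]
    · rw [← hf]
      apply ContinuousLinearMap.opNorm_le_bound _ (norm_nonneg g)
      intro v
      have h1 : f v = g ((WithLp.equiv 1 (X × Y)).symm (v, 0)) := rfl
      rw [h1]
      calc ‖g _‖ ≤ ‖g‖ * ‖(WithLp.equiv 1 (X × Y)).symm (v, 0)‖ := g.le_opNorm _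
        _ = ‖g‖ * ‖v‖ := by rw [WithLp.equiv_symm_apply, WithLp.norm_toLp_fst]
  -- the two slices
  set S₁ : Set (WithLp 1 (X × Y)) :=
    {z | z ∈ closedBall (0 : WithLp 1 (X × Y)) 1 ∧ 1 - β < RCLike.re (g z)} with hS₁
  set S₂ : Set (WithLp 1 (X × Y)) :=
    {z | z ∈ closedBall (0 : WithLp 1 (X × Y)) 1 ∧ 1 - β < RCLike.re ((-g) z)} with hS₂
  set xz : WithLp 1 (X × Y) := (WithLp.equiv 1 (X × Y)).symm (x, 0) with hxz
  have hxz_norm : ‖xz‖ = 1 := by rw [hxz, WithLp.equiv_symm_apply, WithLp.norm_toLp_fst, hx1]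
  have hxz_f : g xz = f x := rfl
  -- closeness estimates
  have hclose : ∀ z ∈ S₁, ‖z - xz‖ ≤ 3*ε/4 := by
    intro z hz
    obtain ⟨hz1, hz2⟩ := hz
    rw [mem_closedBall, dist_eq_norm, sub_zero, l1_norm_eq'] at hz1
    rw [hg_apply] at hz2
    have hre1 : RCLike.re (f z.fst) ≤ ‖z.fst‖ := by
      calc RCLike.re (f z.fst) ≤ ‖f z.fst‖ := RCLike.re_le_norm _
        _ ≤ ‖f‖ * ‖z.fst‖ := f.le_opNorm _
        _ = ‖z.fst‖ := by rw [hf, one_mul]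
    have hz2n : ‖z.snd‖ ≤ β := by linarith
    have hz1S : z.fst ∈ S := by
      rw [hSeq]
      refine ⟨?_, by linarith⟩
      simp only [mem_closedBall, dist_eq_norm, sub_zero]
      linarith [norm_nonneg z.snd]
    have hdist : ‖z.fst - x‖ < ε/4 := by
      have := Metric.dist_le_diam_of_mem hSbdd hz1S hxS
      rw [dist_eq_norm] at this; linarith
    rw [l1_norm_eq']
    have e1 : (z - xz).fst = z.fst - x := rfl
    have e2 : (z - xz).snd = z.snd - 0 := rfl
    rw [e1, e2, sub_zero]
    linarith
  have hneg : ∀ z ∈ S₂, -z ∈ S₁ := by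
    rintro z ⟨hz1, hz2⟩
    refine ⟨?_, ?_⟩
    · simpa only [mem_closedBall, dist_eq_norm, sub_zero, norm_neg] using hz1
    · rw [hg_apply]
      have : (-z).fst = -(z.fst) := rfl
      rw [this, map_neg]
      simpa [hg_apply] using hz2
  -- build the ccs
  set lam : Fin 2 → ℝ := ![1/2, 1/2] with hlam
  set Ss : Fin 2 → Set (WithLp 1 (X × Y)) := ![S₁, S₂] with hSs
  refine ⟨{w | ∃ y : Fin 2 → WithLp 1 (X × Y), (∀ i, y i ∈ Ss i) ∧
      w = ∑ i, ((lam i : ℝ) : 𝕜) • y i}, ?_, ?_, ?_⟩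
  · refine ⟨2, lam, Ss, by norm_num, ?_, ?_, ?_, rfl⟩
    · intro i; fin_cases i <;> norm_num [hlam]
    · rw [hlam, Fin.sum_univ_two]; norm_num
    · intro i
      fin_cases i
      · exact ⟨g, β, hgnorm, hβpos, rfl⟩
      · exact ⟨-g, β, by rw [norm_neg, hgnorm], hβpos, rfl⟩
  · have hA : xz ∈ S₁ := by
      refine ⟨?_, ?_⟩
      · simp only [mem_closedBall, dist_eq_norm, sub_zero, hxz_norm]; exact le_refl 1
      · rw [hxz_f]; exact hβt
    have hB : -xz ∈ S₂ := by
      refine ⟨?_, ?_⟩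
      · simp only [mem_closedBall, dist_eq_norm, sub_zero, norm_neg, hxz_norm]
        exact le_refl 1
      · simp only [ContinuousLinearMap.neg_apply, map_neg, neg_neg]
        rw [hxz_f]; exact hβt
    refine ⟨![xz, -xz], ?_, ?_⟩
    · intro i
      fin_cases i
      · exact hA
      · exact hB
    · simp [Fin.sum_univ_two, hlam, smul_neg]
  · rintro a ⟨ya, hya, rfl⟩ b ⟨yb, hyb, rfl⟩
    have h0a := hya 0
    have h1a := hya 1
    have h0b := hyb 0
    have h1b := hyb 1
    simp only [hSs, Matrix.cons_val_zero, Matrix.cons_val_one, Matrix.head_cons] at h0a h1a h0b h1b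
    have d0 : ‖ya 0 - yb 0‖ ≤ 3*ε/2 := by
      have := hclose _ h0a
      have := hclose _ h0b
      calc ‖ya 0 - yb 0‖ = ‖(ya 0 - xz) - (yb 0 - xz)‖ := by
            rw [sub_sub_sub_cancel_right]
        _ ≤ ‖ya 0 - xz‖ + ‖yb 0 - xz‖ := norm_sub_le _ _
        _ ≤ 3*ε/2 := by linarith
    have d1 : ‖ya 1 - yb 1‖ ≤ 3*ε/2 := by
      have h1 := hclose _ (hneg _ h1a)
      have h2 := hclose _ (hneg _ h1b)
      calc ‖ya 1 - yb 1‖ = ‖(-(ya 1) - xz) - (-(yb 1) - xz)‖ := by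
            rw [show (-(ya 1) - xz) - (-(yb 1) - xz) = -(ya 1 - yb 1) by abel, norm_neg]
        _ ≤ ‖-(ya 1) - xz‖ + ‖-(yb 1) - xz‖ := norm_sub_le _ _
        _ ≤ 3*ε/2 := by linarith
    rw [dist_eq_norm]
    have hsum : (∑ i, ((lam i : ℝ) : 𝕜) • ya i) - (∑ i, ((lam i : ℝ) : 𝕜) • yb i)
        = ((1/2 : ℝ) : 𝕜) • (ya 0 - yb 0) + ((1/2 : ℝ) : 𝕜) • (ya 1 - yb 1) := by
      simp [Fin.sum_univ_two, hlam, smul_sub]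
      abel
    rw [hsum]
    calc ‖_ + _‖ ≤ ‖((1/2:ℝ):𝕜) • (ya 0 - yb 0)‖ + ‖((1/2:ℝ):𝕜) • (ya 1 - yb 1)‖ :=
          norm_add_le _ _
      _ = (1/2) * ‖ya 0 - yb 0‖ + (1/2) * ‖ya 1 - yb 1‖ := by
          rw [norm_smul, norm_smul, RCLike.norm_ofReal,
            abs_of_nonneg (by norm_num : (0:ℝ) ≤ 1/2)]
      _ ≤ 2 * ε := by linarith

end AuxDenting

/-- If `x ∈ S_X` is a denting point, then for every `ε > 0` the space `X ⊕₁ Y` admits a convex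
combination of slices of its unit ball containing `(0,0)` of diameter at most `2ε`; in
particular `X ⊕₁ Y` contains no ccs-Daugavet points. -/
theorem denting_point_l1_sum_small_ccs {𝕜 : Type*} [RCLike 𝕜] {X Y : Type*}
    [NormedAddCommGroup X] [NormedSpace 𝕜 X] [CompleteSpace X]
    [NormedAddCommGroup Y] [NormedSpace 𝕜 Y] [CompleteSpace Y]
    (x : X) (hx : DentingPt 𝕜 x) :
    (∀ ε > (0:ℝ), ∃ C : Set (WithLp 1 (X × Y)), IsCCS 𝕜 C ∧ (0 : WithLp 1 (X × Y)) ∈ C ∧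
        Metric.diam C ≤ 2 * ε) ∧
      ¬ ∃ z : WithLp 1 (X × Y), CcsDaugavetPt 𝕜 z := by
  have key := fun {ε : ℝ} (hε : 0 < ε) => key_lemma (Y := Y) x hx hε
  constructor
  · intro ε hε
    obtain ⟨C, h1, h2, h3⟩ := key hε
    exact ⟨C, h1, h2, Metric.diam_le_of_forall_dist_le (by linarith) h3⟩
  · rintro ⟨z, hz1, hz2⟩
    obtain ⟨C, h1, h2, h3⟩ := key (show (0:ℝ) < 1/4 by norm_num)
    have hsup := hz2 C h1
    have hle : sSup ((fun y => ‖z - y‖) '' C) ≤ 3/2 := by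
      apply csSup_le (Set.Nonempty.image _ ⟨0, h2⟩)
      rintro _ ⟨y, hy, rfl⟩
      have hd : dist y 0 ≤ 1/2 := by
        have := h3 y hy 0 h2; linarith
      rw [dist_eq_norm, sub_zero] at hd
      calc ‖z - y‖ ≤ ‖z‖ + ‖y‖ := norm_sub_le _ _
        _ ≤ 3/2 := by rw [hz1]; linarith
    rw [hsup] at hle
    linarith
end

section
/- Let X and Y be Banach spaces, x ∈ S_X, y ∈ S_Y, and 0 ≤ b < 1. If (x, by) is a super-Δ point of X ⊕_∞ Y, then x is a super-Δ point of X. -/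
open Metric Set Filter MeasureTheory

/-- Downward stability of super-Δ points in `X ⊕_∞ Y` (max norm on `X × Y`):
if `(x, b • y)` is super-Δ with `0 ≤ b < 1`, then `x` is super-Δ. -/
theorem superDelta_down_inftySum {𝕜 : Type*} [RCLike 𝕜] {X Y : Type*}
    [NormedAddCommGroup X] [NormedSpace 𝕜 X] [CompleteSpace X]
    [NormedAddCommGroup Y] [NormedSpace 𝕜 Y] [CompleteSpace Y]
    (x : X) (y : Y) (b : ℝ) (hx : ‖x‖ = 1) (hy : ‖y‖ = 1) (hb0 : 0 ≤ b) (hb1 : b < 1)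
    (h : SuperDeltaPt 𝕜 ((x, (b : 𝕜) • y) : X × Y)) :
    SuperDeltaPt 𝕜 x := by
  obtain ⟨-, hsup⟩ := h
  refine ⟨hx, ?_⟩
  intro W hW hxW
  set F : WeakSpace 𝕜 (X × Y) →L[𝕜] WeakSpace 𝕜 X :=
    WeakSpace.map (ContinuousLinearMap.fst 𝕜 X Y) with hF
  have hW' : WeaklyOpen 𝕜 ((Prod.fst ⁻¹' W : Set (X × Y))) := by
    have : IsOpen (F ⁻¹' (show Set (WeakSpace 𝕜 X) from W)) :=
      hW.preimage F.continuous
    exact this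
  have hby : ‖(b : 𝕜) • y‖ = b := by
    rw [norm_smul, hy, mul_one, RCLike.norm_ofReal, abs_of_nonneg hb0]
  have hmem : ((x, (b:𝕜)•y) : X × Y) ∈ (Prod.fst ⁻¹' W) ∩ closedBall 0 1 := by
    refine ⟨hxW.1, ?_⟩
    rw [mem_closedBall_zero_iff, Prod.norm_def, hby, hx]
    exact max_le le_rfl hb1.le
  have key := hsup _ hW' hmem
  -- the target set and its basic properties
  set A : Set ℝ := (fun u => ‖x - u‖) '' (W ∩ closedBall 0 1) with hA
  have hAne : A.Nonempty := ⟨_, ⟨x, hxW, rfl⟩⟩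
  have hAbdd : ∀ r ∈ A, r ≤ 2 := by
    rintro r ⟨u, ⟨-, hu⟩, rfl⟩
    rw [mem_closedBall_zero_iff] at hu
    calc ‖x - u‖ ≤ ‖x‖ + ‖u‖ := norm_sub_le _ _
    _ ≤ 2 := by rw [hx]; linarith
  have hBdd : BddAbove A := ⟨2, hAbdd⟩
  refine le_antisymm (Real.sSup_le hAbdd (by norm_num)) ?_
  -- lower bound: for all small ε, find a point far from x
  have hstep : ∀ ε : ℝ, 0 < ε → ε ≤ 1 - b → 2 - ε ≤ sSup A := by
    intro ε hε hεb
    have hlt : (2 - ε : ℝ) < sSup ((fun z => ‖((x, (b:𝕜)•y) : X × Y) - z‖) ''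
        ((Prod.fst ⁻¹' W) ∩ closedBall 0 1)) := by rw [key]; linarith
    obtain ⟨r, hrA, hr⟩ := exists_lt_of_lt_csSup
        (Set.Nonempty.image _ ⟨_, hmem⟩) hlt
    obtain ⟨z, hz, rfl⟩ := hrA
    have hz2 : ‖z.2‖ ≤ 1 := by
      have := mem_closedBall_zero_iff.mp hz.2
      exact (norm_prod_le_iff.mp this).2
    have hsnd : ‖(b:𝕜)•y - z.2‖ ≤ 2 - ε := by
      calc ‖(b:𝕜)•y - z.2‖ ≤ ‖(b:𝕜)•y‖ + ‖z.2‖ := norm_sub_le _ _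
      _ ≤ b + 1 := by rw [hby]; linarith
      _ ≤ 2 - ε := by linarith
    replace hr : 2 - ε < max ‖x - z.1‖ ‖(b:𝕜)•y - z.2‖ := hr
    have hfst : 2 - ε < ‖x - z.1‖ :=
      (lt_max_iff.mp hr).resolve_right (not_lt.mpr hsnd)
    have hz1 : z.1 ∈ W ∩ closedBall 0 1 := by
      refine ⟨hz.1, ?_⟩
      rw [mem_closedBall_zero_iff]
      exact (norm_prod_le_iff.mp (mem_closedBall_zero_iff.mp hz.2)).1
    exact le_trans hfst.le (le_csSup hBdd ⟨z.1, hz1, rfl⟩)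
  have hbpos : 0 < 1 - b := by linarith
  have : ∀ ε : ℝ, 0 < ε → 2 - ε ≤ sSup A := by
    intro ε hε
    rcases le_or_gt ε (1 - b) with hle | hgt
    · exact hstep ε hε hle
    · have := hstep (1 - b) hbpos le_rfl
      linarith
  exact le_of_forall_sub_le this
end

section
/- Let X and Y be Banach spaces, x ∈ S_X, y ∈ S_Y, and 0 ≤ b < 1. If (x, by) is a ccs-Daugavet point of X ⊕_∞ Y, then x is a ccs-Daugavet point of X. -/
open Metric Set Filter MeasureTheory

private lemma conv_norm_le' {𝕜 E : Type*} [RCLike 𝕜] [NormedAddCommGroup E] [NormedSpace 𝕜 E]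
    {n : ℕ} (lam : Fin n → ℝ) (hlam : ∀ i, 0 ≤ lam i) (hsum : (∑ i, lam i) = 1)
    (w : Fin n → E) (hw : ∀ i, ‖w i‖ ≤ 1) : ‖∑ i, (lam i : 𝕜) • w i‖ ≤ 1 := by
  calc ‖∑ i, (lam i : 𝕜) • w i‖ ≤ ∑ i, ‖(lam i : 𝕜) • w i‖ := norm_sum_le _ _
    _ ≤ ∑ i, lam i := by
        refine Finset.sum_le_sum fun i _ => ?_
        rw [norm_smul, RCLike.norm_ofReal, abs_of_nonneg (hlam i)]
        calc lam i * ‖w i‖ ≤ lam i * 1 := by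
              exact mul_le_mul_of_nonneg_left (hw i) (hlam i)
          _ = lam i := mul_one _
    _ = 1 := hsum


/-- Downward stability of ccs-Daugavet points in `X ⊕_∞ Y` (max norm on `X × Y`):
if `(x, b • y)` is ccs-Daugavet with `0 ≤ b < 1`, then `x` is ccs-Daugavet. -/
theorem ccsDaugavet_down_inftySum {𝕜 : Type*} [RCLike 𝕜] {X Y : Type*}
    [NormedAddCommGroup X] [NormedSpace 𝕜 X] [CompleteSpace X]
    [NormedAddCommGroup Y] [NormedSpace 𝕜 Y] [CompleteSpace Y]
    (x : X) (y : Y) (b : ℝ) (hx : ‖x‖ = 1) (hy : ‖y‖ = 1) (hb0 : 0 ≤ b) (hb1 : b < 1)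
    (h : CcsDaugavetPt 𝕜 ((x, (b : 𝕜) • y) : X × Y)) :
    CcsDaugavetPt 𝕜 x := by
  obtain ⟨-, h2⟩ := h
  refine ⟨hx, ?_⟩
  intro C hC
  obtain ⟨n, lam, S, hn, hlam, hsum, hS, hCeq⟩ := hC
  choose f α hf hα hSeq using hS
  -- lifted functionals
  set F : Fin n → (X × Y) →L[𝕜] 𝕜 :=
    fun i => (f i).comp (ContinuousLinearMap.fst 𝕜 X Y) with hF
  have hznorm : ∀ z : X, ‖((z, (0:Y)) : X × Y)‖ = ‖z‖ := by
    intro z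
    rw [Prod.norm_def]
    simp [norm_nonneg]
  have hFnorm : ∀ i, ‖F i‖ = 1 := by
    intro i
    refine le_antisymm ?_ ?_
    · refine ContinuousLinearMap.opNorm_le_bound _ zero_le_one fun p => ?_
      have h1 : ‖(f i) p.1‖ ≤ ‖f i‖ * ‖p.1‖ := (f i).le_opNorm _
      have h2 : ‖p.1‖ ≤ ‖p‖ := norm_fst_le p
      calc ‖(F i) p‖ = ‖(f i) p.1‖ := rfl
        _ ≤ ‖f i‖ * ‖p.1‖ := h1
        _ = ‖p.1‖ := by rw [hf i, one_mul]
        _ ≤ ‖p‖ := h2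
        _ = 1 * ‖p‖ := (one_mul _).symm
    · rw [← hf i]
      refine ContinuousLinearMap.opNorm_le_bound _ (norm_nonneg _) fun z => ?_
      have := (F i).le_opNorm ((z, (0:Y)) : X × Y)
      simpa [hF, hznorm z] using this
  -- lifted slices
  set T : Fin n → Set (X × Y) := fun i =>
    {p | p ∈ closedBall (0 : X × Y) 1 ∧ 1 - α i < RCLike.re ((F i) p)} with hT
  have hTslice : ∀ i, IsSlice 𝕜 (T i) := fun i => ⟨F i, α i, hFnorm i, hα i, rfl⟩
  set Ct : Set (X × Y) :=
    {p | ∃ w : Fin n → X × Y, (∀ i, w i ∈ T i) ∧ p = ∑ i, (lam i : 𝕜) • w i} with hCt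
  have hCtccs : IsCCS 𝕜 Ct := ⟨n, lam, T, hn, hlam, hsum, hTslice, rfl⟩
  have hsup := h2 Ct hCtccs
  -- projection of members of Ct lie in C, with second coordinate in the unit ball
  have hproj : ∀ p ∈ Ct, p.1 ∈ C ∧ ‖p.2‖ ≤ 1 := by
    intro p hp
    obtain ⟨w, hw, hpeq⟩ := hp
    have hw1 : ∀ i, ‖w i‖ ≤ 1 := fun i => by
      have := (hw i).1
      rwa [mem_closedBall_zero_iff] at this
    constructor
    · rw [hCeq]
      refine ⟨fun i => (w i).1, fun i => ?_, ?_⟩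
      · rw [hSeq i]
        refine ⟨?_, ?_⟩
        · rw [mem_closedBall_zero_iff]
          exact (norm_fst_le (w i)).trans (hw1 i)
        · exact (hw i).2
      · rw [hpeq]
        rw [Prod.fst_sum]
        simp
    · have : ‖(∑ i, (lam i : 𝕜) • w i : X × Y).2‖ ≤ 1 := by
        have heq : (∑ i, (lam i : 𝕜) • w i : X × Y).2 = ∑ i, (lam i : 𝕜) • (w i).2 := by
          rw [Prod.snd_sum]
          simp
        rw [heq]
        exact conv_norm_le' lam (fun i => (hlam i).le) hsum _
          fun i => (norm_snd_le (w i)).trans (hw1 i)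
      rw [hpeq]
      exact this
  -- the image over C is bounded above by 2
  have hCnorm : ∀ u ∈ C, ‖u‖ ≤ 1 := by
    intro u hu
    rw [hCeq] at hu
    obtain ⟨w, hw, rfl⟩ := hu
    refine conv_norm_le' lam (fun i => (hlam i).le) hsum _ fun i => ?_
    have hmem := hw i
    rw [hSeq i] at hmem
    have := hmem.1
    rwa [mem_closedBall_zero_iff] at this
  have hub : ∀ v ∈ (fun y => ‖x - y‖) '' C, v ≤ 2 := by
    rintro v ⟨u, hu, rfl⟩
    calc ‖x - u‖ ≤ ‖x‖ + ‖u‖ := norm_sub_le _ _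
      _ ≤ 1 + 1 := by rw [hx]; exact add_le_add_right (hCnorm u hu) 1
      _ = 2 := by norm_num
  have hbdd : BddAbove ((fun y => ‖x - y‖) '' C) := ⟨2, hub⟩
  -- Ct is nonempty (else sSup of empty image would be 0 ≠ 2)
  have hCtne : Ct.Nonempty := by
    by_contra hne
    rw [Set.not_nonempty_iff_eq_empty] at hne
    rw [hne] at hsup
    simp [Real.sSup_empty] at hsup
  have himne : ((fun p => ‖(x, (b:𝕜) • y) - p‖) '' Ct).Nonempty := hCtne.image _
  -- key: for every small δ there is u ∈ C with 2 - δ < ‖x - u‖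
  have hkey : ∀ δ : ℝ, 0 < δ → δ < 1 - b → ∃ u ∈ C, 2 - δ < ‖x - u‖ := by
    intro δ hδ hδb
    have hlt : 2 - δ < sSup ((fun p => ‖(x, (b:𝕜) • y) - p‖) '' Ct) := by
      rw [hsup]; linarith
    obtain ⟨v, ⟨p, hp, rfl⟩, hv⟩ := exists_lt_of_lt_csSup himne hlt
    have hp2 : ‖(b:𝕜) • y - p.2‖ ≤ 1 + b := by
      calc ‖(b:𝕜) • y - p.2‖ ≤ ‖(b:𝕜) • y‖ + ‖p.2‖ := norm_sub_le _ _
        _ ≤ b + 1 := by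
            have : ‖(b:𝕜) • y‖ = b := by
              rw [norm_smul, RCLike.norm_ofReal, abs_of_nonneg hb0, hy, mul_one]
            rw [this]
            exact add_le_add_right (hproj p hp).2 b
        _ = 1 + b := by ring
    have hmax : ‖(x, (b:𝕜) • y) - p‖ = max ‖x - p.1‖ ‖(b:𝕜) • y - p.2‖ := by
      rw [Prod.norm_def]; rfl
    refine ⟨p.1, (hproj p hp).1, ?_⟩
    have hv' : 2 - δ < ‖((x, (b:𝕜) • y) : X × Y) - p‖ := hv
    rw [hmax] at hv'
    clear hv
    rename' hv' => hv
    rcases max_cases ‖x - p.1‖ ‖(b:𝕜) • y - p.2‖ with ⟨heq, -⟩ | ⟨heq, -⟩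
    · rwa [heq] at hv
    · exfalso
      rw [heq] at hv
      linarith
  -- conclude
  refine le_antisymm (Real.sSup_le hub (by norm_num)) ?_
  by_contra hcon
  push_neg at hcon
  set s := sSup ((fun y => ‖x - y‖) '' C) with hs
  set δ : ℝ := min (2 - s) (1 - b) / 2 with hδdef
  have h2s : 0 < 2 - s := by linarith
  have h1b : 0 < 1 - b := by linarith
  have hδpos : 0 < δ := by
    rw [hδdef]
    have := lt_min h2s h1b
    linarith
  have hδ1 : δ < 1 - b := by
    have := min_le_right (2 - s) (1 - b)
    rw [hδdef]; linarith
  obtain ⟨u, hu, hlt⟩ := hkey δ hδpos hδ1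
  have hle : ‖x - u‖ ≤ s := le_csSup hbdd ⟨u, hu, rfl⟩
  have : δ < 2 - s := by
    have := min_le_left (2 - s) (1 - b)
    rw [hδdef]; linarith
  linarith
end

section
/- Let X and Y be Banach spaces, x ∈ S_X, y ∈ S_Y, and 0 ≤ b < 1. If (x, by) is a ccs-Δ point of X ⊕_∞ Y, then x is a ccs-Δ point of X. -/
open Metric Set Filter MeasureTheory

/-- Downward stability of ccs-Δ points in `X ⊕_∞ Y` (max norm on `X × Y`):
if `(x, b • y)` is ccs-Δ with `0 ≤ b < 1`, then `x` is ccs-Δ. -/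
theorem ccsDelta_down_inftySum {𝕜 : Type*} [RCLike 𝕜] {X Y : Type*}
    [NormedAddCommGroup X] [NormedSpace 𝕜 X] [CompleteSpace X]
    [NormedAddCommGroup Y] [NormedSpace 𝕜 Y] [CompleteSpace Y]
    (x : X) (y : Y) (b : ℝ) (hx : ‖x‖ = 1) (hy : ‖y‖ = 1) (hb0 : 0 ≤ b) (hb1 : b < 1)
    (h : CcsDeltaPt 𝕜 ((x, (b : 𝕜) • y) : X × Y)) :
    CcsDeltaPt 𝕜 x := by
  obtain ⟨-, hmain⟩ := h
  refine ⟨hx, fun C hC hxC => ?_⟩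
  obtain ⟨n, lam, S, hn, hlam, hsum, hslice, hCeq⟩ := hC
  choose f α hf hα hS using hslice
  -- lifted functionals
  set g : Fin n → (X × Y) →L[𝕜] 𝕜 :=
    fun i => (f i).comp (ContinuousLinearMap.fst 𝕜 X Y) with hg
  have hgapp : ∀ i (p : X × Y), g i p = f i p.1 := fun i p => rfl
  have hgnorm : ∀ i, ‖g i‖ = 1 := by
    intro i
    refine le_antisymm ?_ ?_
    · refine ContinuousLinearMap.opNorm_le_bound _ zero_le_one fun p => ?_
      rw [hgapp, one_mul]
      calc ‖f i p.1‖ ≤ ‖f i‖ * ‖p.1‖ := (f i).le_opNorm _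
        _ = ‖p.1‖ := by rw [hf i, one_mul]
        _ ≤ ‖p‖ := norm_fst_le p
    · rw [← hf i]
      refine ContinuousLinearMap.opNorm_le_bound _ (norm_nonneg _) fun u => ?_
      have := (g i).le_opNorm (u, 0)
      rw [hgapp] at this
      simpa [Prod.norm_def] using this
  set S' : Fin n → Set (X × Y) :=
    fun i => {p | p ∈ closedBall (0 : X × Y) 1 ∧ 1 - α i < RCLike.re (g i p)} with hS'
  set C' : Set (X × Y) :=
    {p | ∃ w : Fin n → X × Y, (∀ i, w i ∈ S' i) ∧ p = ∑ i, (lam i : 𝕜) • w i} with hC'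
  have hCCS' : IsCCS 𝕜 C' :=
    ⟨n, lam, S', hn, hlam, hsum, fun i => ⟨g i, α i, hgnorm i, hα i, rfl⟩, rfl⟩
  have hsumK : (∑ i, ((lam i : ℝ) : 𝕜)) = 1 := by
    rw [← RCLike.ofReal_sum, hsum, RCLike.ofReal_one]
  -- membership of (x, b•y) in C'
  have hxC' : ((x, (b : 𝕜) • y) : X × Y) ∈ C' := by
    rw [hCeq] at hxC
    obtain ⟨w, hw, hxw⟩ := hxC
    refine ⟨fun i => (w i, (b : 𝕜) • y), fun i => ?_, ?_⟩
    · have hwi := hw i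
      rw [hS i] at hwi
      obtain ⟨hwball, hwre⟩ := hwi
      refine ⟨?_, ?_⟩
      · rw [mem_closedBall, dist_zero_right, Prod.norm_def]
        rw [mem_closedBall, dist_zero_right] at hwball
        refine max_le hwball ?_
        rw [norm_smul, RCLike.norm_ofReal, abs_of_nonneg hb0, hy, mul_one]
        exact hb1.le
      · simpa [hgapp] using hwre
    · refine Prod.ext ?_ ?_
      · rw [Prod.fst_sum]; simpa using hxw
      · rw [Prod.snd_sum]
        simp [← Finset.sum_smul, hsumK]
  have hsup' := hmain C' hCCS' hxC'
  -- C' is contained in the closed unit ball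
  have hC'ball : ∀ p ∈ C', ‖p‖ ≤ 1 := by
    rintro p ⟨w, hw, rfl⟩
    calc ‖∑ i, (lam i : 𝕜) • w i‖ ≤ ∑ i, ‖(lam i : 𝕜) • w i‖ := norm_sum_le _ _
      _ ≤ ∑ i, lam i := by
          refine Finset.sum_le_sum fun i _ => ?_
          rw [norm_smul, RCLike.norm_ofReal, abs_of_pos (hlam i)]
          have : ‖w i‖ ≤ 1 := by
            have := (hw i).1
            rwa [mem_closedBall, dist_zero_right] at this
          exact mul_le_of_le_one_right (hlam i).le this
      _ = 1 := hsum
  -- C is contained in the closed unit ball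
  have hCball : ∀ u ∈ C, ‖u‖ ≤ 1 := by
    rw [hCeq]
    rintro u ⟨w, hw, rfl⟩
    calc ‖∑ i, (lam i : 𝕜) • w i‖ ≤ ∑ i, ‖(lam i : 𝕜) • w i‖ := norm_sum_le _ _
      _ ≤ ∑ i, lam i := by
          refine Finset.sum_le_sum fun i _ => ?_
          rw [norm_smul, RCLike.norm_ofReal, abs_of_pos (hlam i)]
          have hwi := hw i
          rw [hS i, mem_setOf_eq, mem_closedBall, dist_zero_right] at hwi
          exact mul_le_of_le_one_right (hlam i).le hwi.1
      _ = 1 := hsum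
  -- projection of C' to C
  have hproj : ∀ p ∈ C', p.1 ∈ C := by
    rintro p ⟨w, hw, rfl⟩
    rw [hCeq]
    refine ⟨fun i => (w i).1, fun i => ?_, ?_⟩
    · rw [hS i]
      obtain ⟨hwball, hwre⟩ := hw i
      rw [mem_closedBall, dist_zero_right] at hwball
      refine ⟨?_, ?_⟩
      · rw [mem_closedBall, dist_zero_right]
        exact (norm_fst_le _).trans hwball
      · simpa [hgapp] using hwre
    · rw [Prod.fst_sum]
      simp
  -- x ∈ C so the image is nonempty, bounded above by 2
  have hxmem : x ∈ C := by rw [hCeq] at hxC ⊢; exact hxC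
  have hbdd : ∀ a ∈ (fun u => ‖x - u‖) '' C, a ≤ 2 := by
    rintro a ⟨u, hu, rfl⟩
    calc ‖x - u‖ ≤ ‖x‖ + ‖u‖ := norm_sub_le _ _
      _ ≤ 1 + 1 := by rw [hx]; exact add_le_add le_rfl (hCball u hu)
      _ = 2 := by norm_num
  have hne' : ((fun p => ‖((x, (b:𝕜) • y) : X × Y) - p‖) '' C').Nonempty :=
    ⟨_, ⟨_, hxC', rfl⟩⟩
  refine le_antisymm (Real.sSup_le hbdd (by norm_num)) ?_
  by_contra hcon
  push_neg at hcon
  set s := sSup ((fun u => ‖x - u‖) '' C) with hs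
  set ε : ℝ := min (2 - s) (1 - b) with hε
  have hεpos : 0 < ε := lt_min (by linarith) (by linarith)
  have hlt2 : 2 - ε < sSup ((fun p => ‖((x, (b:𝕜) • y) : X × Y) - p‖) '' C') := by
    rw [hsup']; linarith
  obtain ⟨a, ⟨p, hpC', rfl⟩, ha⟩ := exists_lt_of_lt_csSup hne' hlt2
  have hsnd : ‖(b : 𝕜) • y - p.2‖ ≤ 1 + b := by
    calc ‖(b : 𝕜) • y - p.2‖ ≤ ‖(b : 𝕜) • y‖ + ‖p.2‖ := norm_sub_le _ _
      _ ≤ b + 1 := by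
          refine add_le_add ?_ ((norm_snd_le p).trans (hC'ball p hpC'))
          rw [norm_smul, RCLike.norm_ofReal, abs_of_nonneg hb0, hy, mul_one]
      _ = 1 + b := by ring
  have hmaxeq : ‖((x, (b:𝕜) • y) : X × Y) - p‖ = max ‖x - p.1‖ ‖(b:𝕜) • y - p.2‖ := by
    rw [Prod.norm_def]; rfl
  have hεle : ε ≤ 1 - b := min_le_right _ _
  have hfst : 2 - ε < ‖x - p.1‖ := by
    simp only [hmaxeq] at ha
    rcases max_cases ‖x - p.1‖ ‖(b:𝕜) • y - p.2‖ with ⟨he, -⟩ | ⟨he, -⟩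
    · rwa [he] at ha
    · rw [he] at ha; linarith
  have hmem : ‖x - p.1‖ ∈ (fun u => ‖x - u‖) '' C := ⟨p.1, hproj p hpC', rfl⟩
  have : ‖x - p.1‖ ≤ s := le_csSup ⟨2, hbdd⟩ hmem
  have hεle2 : ε ≤ 2 - s := min_le_left _ _
  linarith
end

section
/- Let X₁,…,Xₙ be Banach spaces, xₖ ∈ S_{Xₖ} and aₖ ≥ 0 with max aₖ = 1. If some x₁ with a₁ = 1 is a Δ point of X₁, then (a₁x₁,…,aₙxₙ) is a Δ point of X₁ ⊕_∞ ⋯ ⊕_∞ Xₙ. -/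
open Metric Set Filter MeasureTheory

lemma sSup_eq_two_of {A : Set ℝ} (hne : A.Nonempty) (hub : ∀ r ∈ A, r ≤ 2)
    (h : ∀ ε > (0:ℝ), ∃ r ∈ A, 2 - ε ≤ r) : sSup A = 2 := by
  have hbdd : BddAbove A := ⟨2, hub⟩
  refine le_antisymm (csSup_le hne hub) ?_
  refine le_of_forall_pos_le_add (fun ε hε => ?_)
  obtain ⟨r, hrA, hr⟩ := h ε hε
  have := le_csSup hbdd hrA
  linarith


/-- Upward stability of Δ points in finite `⊕_∞`-sums (sup norm on `∀ k, X k`): if `aₖ ∈ [0,1]`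
with `a_{k₀} = 1` and `x_{k₀}` is a Δ point, then `(a₁x₁, …, aₙxₙ)` is a Δ point. -/
theorem delta_up_inftySum {𝕜 : Type*} [RCLike 𝕜] {n : ℕ} {X : Fin n → Type*}
    [∀ k, NormedAddCommGroup (X k)] [∀ k, NormedSpace 𝕜 (X k)] [∀ k, CompleteSpace (X k)]
    (x : ∀ k, X k) (a : Fin n → ℝ) (hx : ∀ k, ‖x k‖ = 1)
    (ha0 : ∀ k, 0 ≤ a k) (ha1 : ∀ k, a k ≤ 1)
    (k₀ : Fin n) (hk₀ : a k₀ = 1) (hΔ : DeltaPt 𝕜 (x k₀)) :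
    DeltaPt 𝕜 (fun k => (a k : 𝕜) • x k) := by
  set xh : ∀ k, X k := fun k => (a k : 𝕜) • x k with hxh
  have hak₀ : ((a k₀ : ℝ) : 𝕜) = 1 := by rw [hk₀]; norm_num
  have hxhk₀ : xh k₀ = x k₀ := by simp [hxh, hak₀]
  have hcoord : ∀ k, ‖xh k‖ = a k := by
    intro k
    simp [hxh, norm_smul, hx k, RCLike.norm_ofReal, abs_of_nonneg (ha0 k)]
  have hxhnorm : ‖xh‖ = 1 := by
    refine le_antisymm ?_ ?_
    · refine (pi_norm_le_iff_of_nonneg (by norm_num)).2 (fun k => ?_)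
      rw [hcoord k]; exact ha1 k
    · calc (1:ℝ) = ‖xh k₀‖ := by rw [hcoord k₀, hk₀]
        _ ≤ ‖xh‖ := norm_le_pi_norm xh k₀
  refine ⟨hxhnorm, fun S hS hxS => ?_⟩
  obtain ⟨f, α, hf, hα, rfl⟩ := hS
  obtain ⟨hxhball, hxhf⟩ := hxS
  -- the coordinate inclusion
  have hsingle_norm : ∀ v : X k₀, ‖(LinearMap.single 𝕜 X k₀) v‖ = ‖v‖ := fun v => by
    simp [LinearMap.single_apply, Pi.norm_single]
  set ι : X k₀ →L[𝕜] ∀ k, X k :=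
    (LinearMap.single 𝕜 X k₀).mkContinuous 1 (fun v => by rw [hsingle_norm]; simp) with hι
  have hιapp : ∀ v : X k₀, ι v = Pi.single k₀ v := fun v => rfl
  set g : X k₀ →L[𝕜] 𝕜 := f.comp ι with hg
  set A := ((fun y => ‖xh - y‖) '' {y | y ∈ closedBall (0:(∀ k, X k)) 1 ∧ 1 - α < RCLike.re (f y)})
  have hub : ∀ r ∈ A, r ≤ 2 := by
    rintro r ⟨y, ⟨hy1, _⟩, rfl⟩
    have hy1' : ‖y‖ ≤ 1 := by simpa [dist_zero_right] using hy1
    calc ‖xh - y‖ ≤ ‖xh‖ + ‖y‖ := norm_sub_le _ _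
      _ ≤ 2 := by rw [hxhnorm]; linarith
  have hne : A.Nonempty := ⟨_, ⟨xh, ⟨hxhball, hxhf⟩, rfl⟩⟩
  refine sSup_eq_two_of hne hub (fun ε hε => ?_)
  -- helper to build the candidate point y from u ∈ B_{X k₀}
  have hbuild : ∀ u : X k₀, ‖u‖ ≤ 1 →
      ‖xh + Pi.single k₀ (u - x k₀)‖ ≤ 1 ∧
      f (xh + Pi.single k₀ (u - x k₀)) = f xh + g u - g (x k₀) ∧
      ‖xh - (xh + Pi.single k₀ (u - x k₀))‖ = ‖x k₀ - u‖ := by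
    intro u hu
    refine ⟨?_, ?_, ?_⟩
    · refine (pi_norm_le_iff_of_nonneg (by norm_num)).2 (fun k => ?_)
      by_cases hk : k = k₀
      · subst hk
        simp [Pi.single_eq_same, hxhk₀, hu]
      · simp [Pi.single_eq_of_ne hk, hcoord k, ha1 k]
    · have hfs : ∀ v : X k₀, f (Pi.single k₀ v) = g v := fun v => rfl
      rw [map_add, hfs, map_sub]
      ring
    · have h4 : xh - (xh + Pi.single k₀ (u - x k₀)) = -(Pi.single k₀ (u - x k₀)) := by abel
      rw [h4, norm_neg, Pi.norm_single, ← norm_neg, neg_sub]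
  set δ := RCLike.re (f xh) - (1 - α) with hδ
  have hδpos : 0 < δ := by simp [hδ]; linarith
  by_cases hgz : g = 0
  · -- take u = -x k₀
    refine ⟨‖xh - (xh + Pi.single k₀ (-x k₀ - x k₀))‖, ⟨_, ⟨?_, ?_⟩, rfl⟩, ?_⟩
    · obtain ⟨h1, _, _⟩ := hbuild (-x k₀) (by rw [norm_neg, hx k₀])
      simpa [dist_zero_right] using h1
    · obtain ⟨_, h2, _⟩ := hbuild (-x k₀) (by rw [norm_neg, hx k₀])
      rw [h2, hgz]
      simpa using hxhf
    · obtain ⟨_, _, h3⟩ := hbuild (-x k₀) (by rw [norm_neg, hx k₀])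
      rw [h3]
      have : ‖x k₀ - -x k₀‖ = 2 := by
        rw [sub_neg_eq_add, ← two_smul 𝕜, norm_smul, hx k₀, mul_one]
        simp
      rw [this]; linarith
  · -- ‖g‖ > 0, normalize
    have hgn : 0 < ‖g‖ := norm_pos_iff.2 hgz
    have hgle : ‖g‖ ≤ 1 := by
      refine ContinuousLinearMap.opNorm_le_bound _ (by norm_num) (fun v => ?_)
      have h5 : ‖f (ι v)‖ ≤ ‖f‖ * ‖ι v‖ := f.le_opNorm _
      rw [hf, one_mul, hιapp, Pi.norm_single] at h5
      simpa [hg, hιapp] using h5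
    set g' : X k₀ →L[𝕜] 𝕜 := ((‖g‖⁻¹ : ℝ) : 𝕜) • g with hg'
    have hg'norm : ‖g'‖ = 1 := by
      rw [hg', norm_smul (((‖g‖⁻¹ : ℝ) : 𝕜)) g, RCLike.norm_ofReal, abs_inv, abs_of_pos hgn,
        inv_mul_cancel₀ hgn.ne']
    have hg'app : ∀ v, RCLike.re (g' v) = ‖g‖⁻¹ * RCLike.re (g v) := fun v => by
      rw [hg']
      have : (((‖g‖⁻¹ : ℝ) : 𝕜) • g) v = ((‖g‖⁻¹ : ℝ) : 𝕜) * g v := rfl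
      rw [this, RCLike.re_ofReal_mul]
    set α' := 1 - RCLike.re (g' (x k₀)) + δ / ‖g‖ with hα'
    have hre_le : RCLike.re (g' (x k₀)) ≤ 1 := by
      calc RCLike.re (g' (x k₀)) ≤ ‖g' (x k₀)‖ := RCLike.re_le_norm _
        _ ≤ ‖g'‖ * ‖x k₀‖ := g'.le_opNorm _
        _ = 1 := by rw [hg'norm, hx k₀]; ring
    have hα'pos : 0 < α' := by
      have : 0 < δ / ‖g‖ := div_pos hδpos hgn
      rw [hα']; linarith
    have hslice : IsSlice 𝕜 {y : X k₀ | y ∈ closedBall (0:X k₀) 1 ∧ 1 - α' < RCLike.re (g' y)} :=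
      ⟨g', α', hg'norm, hα'pos, rfl⟩
    have hxin : x k₀ ∈ {y : X k₀ | y ∈ closedBall (0:X k₀) 1 ∧ 1 - α' < RCLike.re (g' y)} := by
      refine ⟨by simp [dist_zero_right, hx k₀], ?_⟩
      rw [hα']
      have : 0 < δ / ‖g‖ := div_pos hδpos hgn
      linarith
    have hsup := hΔ.2 _ hslice hxin
    have hAne : ((fun y => ‖x k₀ - y‖) '' {y : X k₀ | y ∈ closedBall (0:X k₀) 1 ∧ 1 - α' < RCLike.re (g' y)}).Nonempty :=
      ⟨_, x k₀, hxin, rfl⟩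
    obtain ⟨r, ⟨u, ⟨hu1, hu2⟩, rfl⟩, hru⟩ :=
      exists_lt_of_lt_csSup hAne (by rw [hsup]; linarith : 2 - ε < sSup _)
    have hu1' : ‖u‖ ≤ 1 := by simpa [dist_zero_right] using hu1
    obtain ⟨h1, h2, h3⟩ := hbuild u hu1'
    refine ⟨_, ⟨_, ⟨by simpa [dist_zero_right] using h1, ?_⟩, rfl⟩, ?_⟩
    · -- slice membership of the new point
      rw [h2]
      have hgu : RCLike.re (g u) > RCLike.re (g (x k₀)) - δ := by
        have h1' : RCLike.re (g' u) > RCLike.re (g' (x k₀)) - δ / ‖g‖ := by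
          have := hu2; rw [hα'] at this; linarith
        rw [hg'app, hg'app] at h1'
        have := (mul_lt_mul_iff_right₀ hgn).2 h1'
        rw [mul_sub, mul_comm, ← mul_assoc, mul_inv_cancel₀ hgn.ne', one_mul,
          mul_comm, ← mul_assoc, mul_inv_cancel₀ hgn.ne', one_mul,
          div_eq_mul_inv, mul_comm δ, ← mul_assoc, mul_inv_cancel₀ hgn.ne', one_mul] at this
        linarith
      rw [map_sub, map_add]
      rw [hδ] at hgu
      linarith
    · show 2 - ε ≤ ‖xh - (xh + Pi.single k₀ (u - x k₀))‖
      change 2 - ε < ‖x k₀ - u‖ at hru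
      rw [h3]; linarith
end

section
/- Let X₁, X₂ be Banach spaces with points xᵢ ∈ S_{Xᵢ}. If (x₁, x₂) ∈ S_{X₁ ⊕_∞ X₂} is a Δ point and there exist p₁, p₂ > 1 with 1/p₁ + 1/p₂ = 1 such that x₁ is not a Δ_{p₁} point and x₂ is not a Δ_{p₂} point, then a contradiction follows; i.e., if (x₁, x₂) is Δ, then for every p₁, p₂ > 1 with 1/p₁ + 1/p₂ = 1, either x₁ is Δ_{p₁} or x₂ is Δ_{p₂}. -/
open Metric Set Filter MeasureTheory

lemma exists_re_gt_aux {𝕜 X : Type*} [RCLike 𝕜] [NormedAddCommGroup X] [NormedSpace 𝕜 X]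
    (g : X →L[𝕜] 𝕜) (hg : ‖g‖ = 1) {ε : ℝ} (hε : 0 < ε) :
    ∃ y : X, ‖y‖ ≤ 1 ∧ 1 - ε < RCLike.re (g y) := by
  obtain ⟨y, hy1, hy2⟩ := g.exists_lt_apply_of_lt_opNorm (r := 1 - ε) (by rw [hg]; linarith)
  by_cases h0 : g y = 0
  · refine ⟨y, hy1.le, ?_⟩
    rw [h0] at hy2 ⊢
    simpa using hy2
  · have hn : (0:ℝ) < ‖g y‖ := norm_pos_iff.mpr h0
    set k : 𝕜 := (starRingEnd 𝕜) (g y) / ((‖g y‖ : ℝ) : 𝕜) with hk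
    have hknorm : ‖k‖ = 1 := by
      rw [hk, norm_div, RCLike.norm_conj, RCLike.norm_ofReal, abs_of_pos hn, div_self hn.ne']
    have hval : g (k • y) = ((‖g y‖ : ℝ) : 𝕜) := by
      rw [_root_.map_smul, smul_eq_mul, hk, div_mul_eq_mul_div, RCLike.conj_mul]
      rw [sq, mul_div_assoc, div_self (by exact_mod_cast hn.ne'), mul_one]
    refine ⟨k • y, ?_, ?_⟩
    · rw [norm_smul, hknorm, one_mul]; exact hy1.le
    · rw [hval, RCLike.ofReal_re]; exact hy2

lemma gap_aux1 {b1 b2 a1 a2 D : ℝ} (hD : 0 < D) (key : b1 * b2 < a1 * a2) :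
    (b2 + a2) / D * b1 + (a1 + b1) / D * b2 < (b2 + a2) / D * (a1 + b1) := by
  rw [div_mul_eq_mul_div, div_mul_eq_mul_div, div_mul_eq_mul_div, ← add_div,
    div_lt_div_iff₀ hD hD]
  nlinarith

lemma gap_aux2 {b1 b2 a1 a2 D : ℝ} (hD : 0 < D) (key : b1 * b2 < a1 * a2) :
    (b2 + a2) / D * b1 + (a1 + b1) / D * b2 < (a1 + b1) / D * (a2 + b2) := by
  rw [div_mul_eq_mul_div, div_mul_eq_mul_div, div_mul_eq_mul_div, ← add_div,
    div_lt_div_iff₀ hD hD]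
  nlinarith


set_option maxHeartbeats 1000000 in
/-- If `(x₁, x₂) ∈ S_{X₁ ⊕_∞ X₂}` is a Δ point, then for all `p₁, p₂ > 1` with
`1/p₁ + 1/p₂ = 1`, either `x₁` is a `Δ_{p₁}` point or `x₂` is a `Δ_{p₂}` point. -/
theorem delta_inftySum_deltaP {𝕜 : Type*} [RCLike 𝕜] {X₁ X₂ : Type*}
    [NormedAddCommGroup X₁] [NormedSpace 𝕜 X₁] [CompleteSpace X₁]
    [NormedAddCommGroup X₂] [NormedSpace 𝕜 X₂] [CompleteSpace X₂]
    (x₁ : X₁) (x₂ : X₂) (h1 : ‖x₁‖ = 1) (h2 : ‖x₂‖ = 1)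
    (hΔ : DeltaPt 𝕜 ((x₁, x₂) : X₁ × X₂)) :
    ∀ p₁ p₂ : ℝ, 1 < p₁ → 1 < p₂ → 1 / p₁ + 1 / p₂ = 1 →
      DeltaPPt 𝕜 p₁ x₁ ∨ DeltaPPt 𝕜 p₂ x₂ := by
  intro p₁ p₂ hp₁ hp₂ hp
  by_contra hcon
  push_neg at hcon
  obtain ⟨hnd1, hnd2⟩ := hcon
  unfold DeltaPPt at hnd1 hnd2
  rw [not_and] at hnd1 hnd2
  have H1 := hnd1 h1
  have H2 := hnd2 h2
  push_neg at H1 H2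
  obtain ⟨f₁, α₁, ε₁, hf₁, hα₁, hε₁, hx₁m, hbd₁⟩ := H1
  obtain ⟨f₂, α₂, ε₂, hf₂, hα₂, hε₂, hx₂m, hbd₂⟩ := H2
  set ε₁' := min ε₁ 1 with hε₁'def
  set ε₂' := min ε₂ 1 with hε₂'def
  have hε₁' : 0 < ε₁' := lt_min hε₁ one_pos
  have hε₂' : 0 < ε₂' := lt_min hε₂ one_pos
  set β₁ := 1 - RCLike.re (f₁ x₁) with hβ₁def
  set β₂ := 1 - RCLike.re (f₂ x₂) with hβ₂def
  have hβ₁0 : 0 ≤ β₁ := by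
    have ha := RCLike.re_le_norm (f₁ x₁)
    have hb := f₁.le_opNorm x₁
    rw [hf₁, h1, one_mul] at hb
    rw [hβ₁def]; linarith only [ha, hb]
  have hβ₂0 : 0 ≤ β₂ := by
    have ha := RCLike.re_le_norm (f₂ x₂)
    have hb := f₂.le_opNorm x₂
    rw [hf₂, h2, one_mul] at hb
    rw [hβ₂def]; linarith only [ha, hb]
  have hβ₁α : β₁ < α₁ := by
    have hm := hx₁m.2
    rw [hβ₁def]; linarith only [hm]
  have hβ₂α : β₂ < α₂ := by
    have hm := hx₂m.2
    rw [hβ₂def]; linarith only [hm]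
  set a₁ := p₁ * α₁ - β₁ with ha₁def
  set a₂ := p₂ * α₂ - β₂ with ha₂def
  have ha₁gt : (p₁ - 1) * α₁ < a₁ := by rw [ha₁def]; linarith only [hβ₁α]
  have ha₂gt : (p₂ - 1) * α₂ < a₂ := by rw [ha₂def]; linarith only [hβ₂α]
  have ha₁0 : 0 < a₁ :=
    lt_of_le_of_lt (mul_nonneg (by linarith only [hp₁]) hα₁.le) ha₁gt
  have ha₂0 : 0 < a₂ :=
    lt_of_le_of_lt (mul_nonneg (by linarith only [hp₂]) hα₂.le) ha₂gt
  have hp₁0 : p₁ ≠ 0 := by linarith only [hp₁]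
  have hp₂0 : p₂ ≠ 0 := by linarith only [hp₂]
  have hpq : p₂ + p₁ = p₁ * p₂ := by
    field_simp at hp
    linarith only [hp]
  have key : β₁ * β₂ < a₁ * a₂ := by
    have e1 : β₁ * β₂ ≤ α₁ * α₂ := mul_le_mul hβ₁α.le hβ₂α.le hβ₂0 hα₁.le
    have e2 : ((p₁ - 1) * α₁) * ((p₂ - 1) * α₂) < a₁ * a₂ :=
      mul_lt_mul'' ha₁gt ha₂gt (mul_nonneg (by linarith only [hp₁]) hα₁.le)
        (mul_nonneg (by linarith only [hp₂]) hα₂.le)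
    have e3 : (p₁ - 1) * (p₂ - 1) = 1 := by linear_combination -hpq
    have e4 : ((p₁ - 1) * α₁) * ((p₂ - 1) * α₂) = α₁ * α₂ := by
      linear_combination α₁ * α₂ * e3
    linarith only [e1, e2, e4]
  set D := a₁ + β₁ + β₂ + a₂ with hDdef
  have hD : 0 < D := by
    rw [hDdef]; linarith only [ha₁0, ha₂0, hβ₁0, hβ₂0]
  set c₁ := (β₂ + a₂) / D with hc₁def
  set c₂ := (a₁ + β₁) / D with hc₂def
  have hc₁ : 0 < c₁ := div_pos (by linarith only [ha₂0, hβ₂0]) hD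
  have hc₂ : 0 < c₂ := div_pos (by linarith only [ha₁0, hβ₁0]) hD
  have hcsum : c₁ + c₂ = 1 := by
    rw [hc₁def, hc₂def, ← add_div, div_eq_one_iff_eq hD.ne', hDdef]; ring
  have hgap1 : c₁ * β₁ + c₂ * β₂ < c₁ * (p₁ * α₁) := by
    have hpa : p₁ * α₁ = a₁ + β₁ := by rw [ha₁def]; ring
    rw [hpa, hc₁def, hc₂def]
    exact gap_aux1 hD key
  have hgap2 : c₁ * β₁ + c₂ * β₂ < c₂ * (p₂ * α₂) := by
    have hpa : p₂ * α₂ = a₂ + β₂ := by rw [ha₂def]; ring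
    rw [hpa, hc₁def, hc₂def]
    exact gap_aux2 hD key
  set α := min (c₁ * (p₁ * α₁)) (c₂ * (p₂ * α₂)) with hαdef
  have hα : 0 < α :=
    lt_min (mul_pos hc₁ (mul_pos (by linarith only [hp₁]) hα₁))
      (mul_pos hc₂ (mul_pos (by linarith only [hp₂]) hα₂))
  have hβα : c₁ * β₁ + c₂ * β₂ < α := lt_min hgap1 hgap2
  set F : (X₁ × X₂) →L[𝕜] 𝕜 :=
    ((c₁ : 𝕜)) • (f₁.comp (ContinuousLinearMap.fst 𝕜 X₁ X₂)) +
      ((c₂ : 𝕜)) • (f₂.comp (ContinuousLinearMap.snd 𝕜 X₁ X₂)) with hFdef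
  have hFapp : ∀ y : X₁ × X₂, F y = (c₁ : 𝕜) * f₁ y.1 + (c₂ : 𝕜) * f₂ y.2 := by
    intro y
    simp [hFdef, smul_eq_mul]
  have hFre : ∀ y : X₁ × X₂,
      RCLike.re (F y) = c₁ * RCLike.re (f₁ y.1) + c₂ * RCLike.re (f₂ y.2) := by
    intro y
    rw [hFapp y, _root_.map_add, RCLike.re_ofReal_mul, RCLike.re_ofReal_mul]
  have hFle : ∀ y : X₁ × X₂, ‖F y‖ ≤ ‖y‖ := by
    intro y
    have e1 : ‖f₁ y.1‖ ≤ ‖y‖ := by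
      have hb := f₁.le_opNorm y.1
      rw [hf₁, one_mul] at hb
      exact hb.trans (norm_fst_le y)
    have e2 : ‖f₂ y.2‖ ≤ ‖y‖ := by
      have hb := f₂.le_opNorm y.2
      rw [hf₂, one_mul] at hb
      exact hb.trans (norm_snd_le y)
    calc ‖F y‖ ≤ ‖(c₁ : 𝕜) * f₁ y.1‖ + ‖(c₂ : 𝕜) * f₂ y.2‖ := by
          rw [hFapp y]; exact norm_add_le _ _
      _ = c₁ * ‖f₁ y.1‖ + c₂ * ‖f₂ y.2‖ := by
          rw [norm_mul, norm_mul, RCLike.norm_ofReal, RCLike.norm_ofReal,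
            abs_of_pos hc₁, abs_of_pos hc₂]
      _ ≤ c₁ * ‖y‖ + c₂ * ‖y‖ :=
          add_le_add (mul_le_mul_of_nonneg_left e1 hc₁.le) (mul_le_mul_of_nonneg_left e2 hc₂.le)
      _ = ‖y‖ := by rw [← add_mul, hcsum, one_mul]
  have hFnorm : ‖F‖ = 1 := by
    refine le_antisymm (F.opNorm_le_bound zero_le_one fun y => by rw [one_mul]; exact hFle y) ?_
    by_contra hlt
    push_neg at hlt
    have hε : 0 < 1 - ‖F‖ := by linarith only [hlt]
    obtain ⟨y₁, hy₁, hry₁⟩ := exists_re_gt_aux f₁ hf₁ hε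
    obtain ⟨y₂, hy₂, hry₂⟩ := exists_re_gt_aux f₂ hf₂ hε
    have hyn : ‖((y₁, y₂) : X₁ × X₂)‖ ≤ 1 := by
      rw [Prod.norm_def]; exact max_le hy₁ hy₂
    have e1 := mul_lt_mul_of_pos_left hry₁ hc₁
    have e2 := mul_lt_mul_of_pos_left hry₂ hc₂
    have e3 : c₁ * ‖F‖ + c₂ * ‖F‖ = ‖F‖ := by rw [← add_mul, hcsum, one_mul]
    have hA : ‖F‖ < RCLike.re (F (y₁, y₂)) := by
      rw [hFre (y₁, y₂)]
      linarith only [e1, e2, e3, hcsum]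
    have hB : RCLike.re (F (y₁, y₂)) ≤ ‖F‖ := by
      refine (RCLike.re_le_norm _).trans ?_
      calc ‖F (y₁, y₂)‖ ≤ ‖F‖ * ‖((y₁, y₂) : X₁ × X₂)‖ := F.le_opNorm _
        _ ≤ ‖F‖ * 1 := mul_le_mul_of_nonneg_left hyn (norm_nonneg F)
        _ = ‖F‖ := mul_one _
    linarith only [hA, hB]
  set S : Set (X₁ × X₂) :=
    {y | y ∈ closedBall (0 : X₁ × X₂) 1 ∧ 1 - α < RCLike.re (F y)} with hSdef
  have hS : IsSlice 𝕜 S := ⟨F, α, hFnorm, hα, hSdef⟩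
  have hxmem : ((x₁, x₂) : X₁ × X₂) ∈ S := by
    rw [hSdef]
    refine ⟨?_, ?_⟩
    · rw [mem_closedBall_zero_iff, Prod.norm_def]
      simp [h1, h2]
    · rw [hFre (x₁, x₂)]
      have er1 : RCLike.re (f₁ (x₁, x₂).1) = 1 - β₁ := by simp [hβ₁def]
      have er2 : RCLike.re (f₂ (x₁, x₂).2) = 1 - β₂ := by simp [hβ₂def]
      rw [er1, er2]
      have expand : c₁ * (1 - β₁) + c₂ * (1 - β₂) = (c₁ + c₂) - (c₁ * β₁ + c₂ * β₂) := by ring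
      rw [expand, hcsum]
      linarith only [hβα]
  have hsup := hΔ.2 S hS hxmem
  set m := min ε₁' ε₂' with hmdef
  have hm : 0 < m := lt_min hε₁' hε₂'
  have hm1 : m ≤ 1 := (min_le_left _ _).trans (min_le_right ε₁ 1)
  have hub : ∀ v ∈ (fun y => ‖((x₁, x₂) : X₁ × X₂) - y‖) '' S, v ≤ 2 - m := by
    rintro v ⟨y, hyS, rfl⟩
    rw [hSdef, mem_setOf_eq, mem_closedBall_zero_iff] at hyS
    obtain ⟨hyn, hyre⟩ := hyS
    rw [hFre y] at hyre
    have hy1n : ‖y.1‖ ≤ 1 := (norm_fst_le y).trans hyn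
    have hy2n : ‖y.2‖ ≤ 1 := (norm_snd_le y).trans hyn
    have hr1le : RCLike.re (f₁ y.1) ≤ 1 := by
      have ha := RCLike.re_le_norm (f₁ y.1)
      have hb := f₁.le_opNorm y.1
      rw [hf₁, one_mul] at hb
      linarith only [ha, hb, hy1n]
    have hr2le : RCLike.re (f₂ y.2) ≤ 1 := by
      have ha := RCLike.re_le_norm (f₂ y.2)
      have hb := f₂.le_opNorm y.2
      rw [hf₂, one_mul] at hb
      linarith only [ha, hb, hy2n]
    have hin1 : 1 - p₁ * α₁ < RCLike.re (f₁ y.1) := by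
      have hαle : α ≤ c₁ * (p₁ * α₁) := min_le_left _ _
      have h5 : c₁ * (1 - p₁ * α₁) < c₁ * RCLike.re (f₁ y.1) := by
        have h6 := mul_le_mul_of_nonneg_left hr2le hc₂.le
        have expand : c₁ * (1 - p₁ * α₁) = c₁ - c₁ * (p₁ * α₁) := by ring
        rw [expand]
        linarith only [hαle, hyre, h6, hcsum]
      exact lt_of_mul_lt_mul_left h5 hc₁.le
    have hin2 : 1 - p₂ * α₂ < RCLike.re (f₂ y.2) := by
      have hαle : α ≤ c₂ * (p₂ * α₂) := min_le_right _ _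
      have h5 : c₂ * (1 - p₂ * α₂) < c₂ * RCLike.re (f₂ y.2) := by
        have h6 := mul_le_mul_of_nonneg_left hr1le hc₁.le
        have expand : c₂ * (1 - p₂ * α₂) = c₂ - c₂ * (p₂ * α₂) := by ring
        rw [expand]
        linarith only [hαle, hyre, h6, hcsum]
      exact lt_of_mul_lt_mul_left h5 hc₂.le
    have hd1 : ‖x₁ - y.1‖ < 2 - ε₁' := by
      have := hbd₁ y.1 (mem_closedBall_zero_iff.mpr hy1n) hin1
      have h7 : ε₁' ≤ ε₁ := min_le_left _ _
      linarith only [this, h7]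
    have hd2 : ‖x₂ - y.2‖ < 2 - ε₂' := by
      have := hbd₂ y.2 (mem_closedBall_zero_iff.mpr hy2n) hin2
      have h7 : ε₂' ≤ ε₂ := min_le_left _ _
      linarith only [this, h7]
    have hsub : ((x₁, x₂) : X₁ × X₂) - y = (x₁ - y.1, x₂ - y.2) := rfl
    show ‖((x₁, x₂) : X₁ × X₂) - y‖ ≤ 2 - m
    rw [hsub, Prod.norm_def]
    have hm2 : m ≤ ε₁' := min_le_left _ _
    have hm3 : m ≤ ε₂' := min_le_right _ _
    exact max_le (by linarith only [hd1, hm2]) (by linarith only [hd2, hm3])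
  have hfin : sSup ((fun y => ‖((x₁, x₂) : X₁ × X₂) - y‖) '' S) ≤ 2 - m :=
    Real.sSup_le hub (by linarith only [hm1])
  rw [hsup] at hfin
  linarith only [hfin, hm]
end

section
/- Let {Xₖ}ₖ∈ℕ be a countable family of Banach spaces and Z = (⊕ₖ Xₖ)_{ℓ₁} their ℓ₁-sum. Let xₖ ∈ S_{Xₖ} and aₖ > 0 with Σ aₖ = 1. If each xₖ is a Daugavet point of Xₖ, then (a₁x₁, a₂x₂, …) is a Daugavet point of Z. -/
open Metric Set Filter MeasureTheory

section Helpers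
variable {X : ℕ → Type*} [∀ k, NormedAddCommGroup (X k)]

lemma lp_one_norm_eq (f : lp X 1) : ‖f‖ = ∑' k, ‖f k‖ := by
  have := lp.norm_eq_tsum_rpow (E := X) (p := 1) (by norm_num) f
  simpa using this

lemma lp_one_summable (f : lp X 1) : Summable fun k => ‖f k‖ := by
  have := (lp.memℓp f).summable (p := 1) (by norm_num)
  simpa using this

lemma lp_one_hasSum_norm (f : lp X 1) : HasSum (fun k => ‖f k‖) ‖f‖ := by
  have := lp.hasSum_norm (E := X) (p := 1) (by norm_num) f
  simpa using this

lemma lp_norm_single' (k : ℕ) (v : X k) : ‖lp.single 1 k v‖ = ‖v‖ := by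
  classical
  have := lp.norm_single (E := X) (p := 1) (by norm_num) k v
  simpa using this

variable {𝕜 : Type*} [RCLike 𝕜] [∀ k, NormedSpace 𝕜 (X k)]

lemma lp_single_add (k : ℕ) (a b : X k) :
    lp.single 1 k (a + b) = lp.single 1 k a + lp.single 1 k b := by
  classical
  refine lp.ext (funext fun j => ?_)
  by_cases hj : j = k
  · subst hj; simp [lp.single_apply_self]
  · simp [lp.single_apply_ne _ _ _ hj]

noncomputable def lpIncl (k : ℕ) : X k →L[𝕜] lp X 1 :=
  LinearMap.mkContinuous
    { toFun := fun v => lp.single 1 k v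
      map_add' := fun a b => lp_single_add k a b
      map_smul' := fun c v => (lp.single_smul 1 k c v) }
    1 (fun v => by simp [lp_norm_single'])

@[simp] lemma lpIncl_apply (k : ℕ) (v : X k) :
    (lpIncl (𝕜 := 𝕜) k v : lp X 1) = lp.single 1 k v := rfl

end Helpers

set_option maxHeartbeats 1000000 in
/-- Upward stability of Daugavet points in countable `ℓ₁`-sums: if each `xₖ ∈ S_{Xₖ}` is a
Daugavet point and `aₖ > 0` with `Σ aₖ = 1`, then `(a₁x₁, a₂x₂, …)` is a Daugavet point of
`(⊕ₖ Xₖ)_{ℓ₁}`. -/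
theorem daugavet_up_l1_countable {𝕜 : Type*} [RCLike 𝕜] {X : ℕ → Type*}
    [∀ k, NormedAddCommGroup (X k)] [∀ k, NormedSpace 𝕜 (X k)] [∀ k, CompleteSpace (X k)]
    (x : ∀ k, X k) (a : ℕ → ℝ) (hx : ∀ k, ‖x k‖ = 1) (ha : ∀ k, 0 < a k)
    (hsum : HasSum a 1) (hD : ∀ k, DaugavetPt 𝕜 (x k))
    (z : lp X 1) (hz : ∀ k, z k = (a k : 𝕜) • x k) :
    DaugavetPt 𝕜 z := by
  classical
  have hfact : Fact ((1 : ENNReal) ≤ 1) := ⟨le_rfl⟩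
  have ha1 : ∀ k, a k ≤ 1 := fun k => by
    have := Summable.le_tsum hsum.summable k (fun j _ => (ha j).le)
    rwa [hsum.tsum_eq] at this
  have hzk : ∀ k, ‖z k‖ = a k := fun k => by
    rw [hz k, norm_smul, hx k]
    simp [abs_of_pos (ha k)]
  have hznorm : ‖z‖ = 1 := by
    rw [lp_one_norm_eq]
    simp_rw [hzk]
    exact hsum.tsum_eq
  refine ⟨hznorm, ?_⟩
  rintro S ⟨f, α, hf, hα, rfl⟩
  have key : ∀ ε > (0:ℝ), ∃ u : lp X 1,
      (u ∈ closedBall (0 : lp X 1) 1 ∧ 1 - α < RCLike.re (f u)) ∧ 2 - ε ≤ ‖z - u‖ := by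
    intro ε hε
    set β := min α 1 / 2 with hβdef
    have hβ : 0 < β := by positivity
    have hβ1 : β ≤ 1/2 := by
      have : min α 1 ≤ 1 := min_le_right _ _
      simp only [hβdef]; linarith
    have hβα : 2 * β ≤ α := by
      have : min α 1 ≤ α := min_le_left _ _
      simp only [hβdef]; linarith
    obtain ⟨w, hw1, hw2⟩ := f.exists_lt_apply_of_lt_opNorm (r := 1 - β) (by rw [hf]; linarith)
    have hfw : f w ≠ 0 := by
      intro h; rw [h] at hw2; simp at hw2; linarith
    set c : 𝕜 := (starRingEnd 𝕜) (f w) / (‖f w‖ : 𝕜) with hc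
    have hnc : ‖c‖ = 1 := by
      rw [hc, norm_div, RCLike.norm_conj]
      simp [norm_ne_zero_iff.2 hfw]
    set w' : lp X 1 := c • w with hw'
    have hw'norm : ‖w'‖ ≤ 1 := by
      rw [hw', norm_smul, hnc, one_mul]; exact hw1.le
    have hfw' : RCLike.re (f w') = ‖f w‖ := by
      rw [hw', _root_.map_smul, hc]
      have h5 : (starRingEnd 𝕜) (f w) / (‖f w‖ : 𝕜) * f w = (‖f w‖ : 𝕜) := by
        rw [div_mul_eq_mul_div, RCLike.conj_mul]
        rw [show ((‖f w‖:ℝ) :𝕜) ^ 2 = ((‖f w‖ :ℝ): 𝕜) * (‖f w‖:ℝ) by ring]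
        rw [mul_div_assoc, div_self (by exact_mod_cast norm_ne_zero_iff.2 hfw)]
        ring
      rw [smul_eq_mul, h5, RCLike.ofReal_re]
    have hfw'2 : 1 - β < RCLike.re (f w') := by rw [hfw']; exact hw2
    have hsum1 : HasSum (fun j => (lpIncl (𝕜 := 𝕜) j (w' j) : lp X 1)) w' := by
      simpa only [lpIncl_apply] using lp.hasSum_single (E := X) (p := 1) (by norm_num) w'
    have hsum2 : HasSum (fun j => RCLike.re (f (lpIncl (𝕜 := 𝕜) j (w' j)))) (RCLike.re (f w')) :=
      RCLike.reCLM.hasSum (f.hasSum hsum1)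
    have hsum3 : HasSum (fun j => (1 - β) * ‖w' j‖) ((1 - β) * ‖w'‖) :=
      (lp_one_hasSum_norm w').mul_left _
    obtain ⟨k, hk⟩ : ∃ j, (1 - β) * ‖w' j‖ < RCLike.re (f (lpIncl (𝕜 := 𝕜) j (w' j))) := by
      by_contra h
      push_neg at h
      have h6 := hasSum_le h hsum2 hsum3
      have h2 : (1 - β) * ‖w'‖ ≤ 1 - β := by nlinarith [hw'norm]
      linarith
    have hvpos : 0 < ‖w' k‖ := by
      rcases (norm_nonneg (w' k)).lt_or_eq with h | h
      · exact h
      · exfalso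
        have h0 : (w' k : X k) = 0 := norm_eq_zero.1 h.symm
        rw [h0] at hk
        simp only [map_zero, norm_zero, mul_zero, lt_self_iff_false] at hk
    set g : X k →L[𝕜] 𝕜 := f.comp (lpIncl k) with hg
    have hgv : (1 - β) * ‖w' k‖ < RCLike.re (g (w' k)) := hk
    have hgle : ‖g‖ ≤ 1 := by
      refine ContinuousLinearMap.opNorm_le_bound _ zero_le_one (fun y => ?_)
      rw [one_mul]
      calc ‖g y‖ ≤ ‖f‖ * ‖(lpIncl (𝕜 := 𝕜) k y : lp X 1)‖ := f.le_opNorm _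
        _ = ‖y‖ := by rw [hf, one_mul, lpIncl_apply, lp_norm_single']
    have hglt : 1 - β < ‖g‖ := by
      have h1 : RCLike.re (g (w' k)) ≤ ‖g (w' k)‖ := RCLike.re_le_norm _
      have h2 : ‖g (w' k)‖ ≤ ‖g‖ * ‖w' k‖ := g.le_opNorm _
      nlinarith
    have hgpos : 0 < ‖g‖ := by linarith
    set gh : X k →L[𝕜] 𝕜 := ((‖g‖⁻¹ : ℝ) : 𝕜) • g with hgh
    have hghap : ∀ y, gh y = ((‖g‖⁻¹ : ℝ) : 𝕜) * g y := fun y => rfl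
    have hghapn : ∀ y, ‖gh y‖ = ‖g‖⁻¹ * ‖g y‖ := fun y => by
      rw [hghap, norm_mul, RCLike.norm_ofReal, abs_of_pos (by positivity)]
    have hghle : ‖gh‖ ≤ 1 := by
      refine ContinuousLinearMap.opNorm_le_bound _ zero_le_one fun y => ?_
      rw [hghapn, one_mul]
      calc ‖g‖⁻¹ * ‖g y‖ ≤ ‖g‖⁻¹ * (‖g‖ * ‖y‖) :=
            mul_le_mul_of_nonneg_left (g.le_opNorm y) (inv_pos.2 hgpos).le
        _ = ‖y‖ := by field_simp
    have hghge : 1 ≤ ‖gh‖ := by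
      have hb : ∀ y, ‖g y‖ ≤ (‖g‖ * ‖gh‖) * ‖y‖ := fun y => by
        have h1 : ‖g y‖ = ‖g‖ * ‖gh y‖ := by rw [hghapn]; field_simp
        rw [h1, mul_assoc]
        exact mul_le_mul_of_nonneg_left (gh.le_opNorm y) hgpos.le
      have h2 := ContinuousLinearMap.opNorm_le_bound g (by positivity) hb
      nlinarith [hgpos]
    have hghnorm : ‖gh‖ = 1 := le_antisymm hghle hghge
    have hghre : ∀ y, RCLike.re (gh y) = ‖g‖⁻¹ * RCLike.re (g y) := fun y => by
      rw [hghap, RCLike.re_ofReal_mul]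
    have hslice : IsSlice 𝕜 {y : X k | y ∈ closedBall (0 : X k) 1 ∧ 1 - β < RCLike.re (gh y)} :=
      ⟨gh, β, hghnorm, hβ, rfl⟩
    have hS2 := (hD k).2 _ hslice
    have hinv : 1 ≤ ‖g‖⁻¹ := (one_le_inv₀ hgpos).2 hgle
    have hmemv : ((‖w' k‖⁻¹ : ℝ) : 𝕜) • (w' k : X k) ∈
        {y : X k | y ∈ closedBall (0 : X k) 1 ∧ 1 - β < RCLike.re (gh y)} := by
      constructor
      · rw [mem_closedBall_zero_iff, norm_smul, RCLike.norm_ofReal,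
          abs_of_pos (inv_pos.2 hvpos), inv_mul_cancel₀ hvpos.ne']
      · rw [hghre, _root_.map_smul]
        have h7 : RCLike.re (((‖w' k‖⁻¹ : ℝ) : 𝕜) • g (w' k)) =
            ‖w' k‖⁻¹ * RCLike.re (g (w' k)) := by
          rw [← RCLike.real_smul_eq_coe_smul (K := 𝕜), RCLike.smul_re]
        rw [h7]
        have hA : 1 - β < ‖w' k‖⁻¹ * RCLike.re (g (w' k)) := by
          have h9 := mul_lt_mul_of_pos_left hgv (inv_pos.2 hvpos)
          rwa [show ‖(w' k : X k)‖⁻¹ * ((1 - β) * ‖(w' k : X k)‖) = 1 - β by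
            field_simp] at h9
        nlinarith [hA, hinv, hβ1]
    have hTne : ((fun y => ‖x k - y‖) ''
      {y : X k | y ∈ closedBall (0 : X k) 1 ∧ 1 - β < RCLike.re (gh y)}).Nonempty :=
      ⟨_, ⟨_, hmemv, rfl⟩⟩
    obtain ⟨r, hrT, hrgt⟩ := exists_lt_of_lt_csSup hTne
      (show (2:ℝ) - ε < sSup ((fun y => ‖x k - y‖) ''
        {y : X k | y ∈ closedBall (0 : X k) 1 ∧ 1 - β < RCLike.re (gh y)}) by
        rw [hS2]; linarith)
    obtain ⟨uk, ⟨huk1, huk2⟩, rfl⟩ := hrT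
    refine ⟨lpIncl (𝕜 := 𝕜) k uk, ⟨?_, ?_⟩, ?_⟩
    · rw [mem_closedBall_zero_iff, lpIncl_apply, lp_norm_single']
      rwa [mem_closedBall_zero_iff] at huk1
    · -- 1 - α < re (f (lpIncl k uk)) = re (g uk)
      have e0 : RCLike.re (f (lpIncl (𝕜 := 𝕜) k uk)) = RCLike.re (g uk) := rfl
      rw [e0]
      have e1 : RCLike.re (g uk) = ‖g‖ * RCLike.re (gh uk) := by
        rw [hghre uk]
        field_simp
      rw [e1]
      nlinarith [huk2, hglt, hgpos, hβ, hβα, hβ1]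
    · -- norm estimate
      set u : lp X 1 := lpIncl (𝕜 := 𝕜) k uk with hu
      have hcoe : ∀ j, ‖(z - u) j‖ = if h : j = k then ‖z k - uk‖ else a j := by
        intro j
        by_cases hj : j = k
        · subst hj
          simp only [dif_pos]
          congr 1
          simp [hu, lp.single_apply_self]
        · rw [dif_neg hj]
          have : (z - u) j = z j := by
            simp [hu, lp.single_apply_ne _ _ _ hj, Pi.single_eq_of_ne hj]
          rw [this, hzk j]
      have hsummF : Summable (fun j => if h : j = k then ‖z k - uk‖ else a j) :=
        (lp_one_summable (z - u)).congr hcoe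
      have hnorm1 : ‖z - u‖ = ‖z k - uk‖ + (1 - a k) := by
        rw [lp_one_norm_eq]
        rw [tsum_congr hcoe]
        rw [Summable.tsum_eq_add_tsum_ite hsummF k]
        have e2 : (fun j => if j = k then 0 else if h : j = k then ‖z k - uk‖ else a j) =
            (fun j => if j = k then 0 else a j) := by
          funext j
          by_cases hj : j = k
          · simp [hj]
          · simp [hj]
        rw [dif_pos rfl, e2]
        have e3 : ∑' j, (if j = k then (0:ℝ) else a j) = 1 - a k := by
          have := Summable.tsum_eq_add_tsum_ite hsum.summable k
          rw [hsum.tsum_eq] at this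
          linarith
        rw [e3]
      have tri : ‖x k - uk‖ ≤ ‖x k - z k‖ + ‖z k - uk‖ := by
        have := norm_add_le (x k - z k) (z k - uk)
        simpa [sub_add_sub_cancel] using this
      have h3 : ‖x k - z k‖ = 1 - a k := by
        rw [hz k]
        have e4 : x k - (a k : 𝕜) • x k = ((1 - a k : ℝ) : 𝕜) • x k := by
          push_cast
          rw [sub_smul, one_smul]
        rw [e4, norm_smul, RCLike.norm_ofReal, abs_of_nonneg (by linarith [ha1 k]), hx k,
          mul_one]
      rw [hnorm1]
      linarith
  -- assemble
  obtain ⟨u0, hu0, _⟩ := key 1 one_pos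
  have hne : ((fun y => ‖z - y‖) ''
      {y | y ∈ closedBall (0 : lp X 1) 1 ∧ 1 - α < RCLike.re (f y)}).Nonempty :=
    ⟨_, ⟨u0, hu0, rfl⟩⟩
  have hbdd : ∀ r ∈ (fun y => ‖z - y‖) ''
      {y | y ∈ closedBall (0 : lp X 1) 1 ∧ 1 - α < RCLike.re (f y)}, r ≤ 2 := by
    rintro r ⟨y, ⟨hy1, _⟩, rfl⟩
    rw [mem_closedBall_zero_iff] at hy1
    calc ‖z - y‖ ≤ ‖z‖ + ‖y‖ := norm_sub_le _ _
      _ ≤ 2 := by rw [hznorm]; linarith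
  refine le_antisymm (csSup_le hne hbdd) ?_
  by_contra hlt
  push_neg at hlt
  set σ := sSup ((fun y => ‖z - y‖) ''
      {y | y ∈ closedBall (0 : lp X 1) 1 ∧ 1 - α < RCLike.re (f y)}) with hσ
  obtain ⟨u, hu, h2⟩ := key ((2 - σ)/2) (by linarith)
  have : ‖z - u‖ ≤ σ := le_csSup ⟨2, fun r hr => hbdd r hr⟩ ⟨u, hu, rfl⟩
  linarith
end

section
/- Let μ be a measure and X a Banach space, and let f ∈ S_{L_∞(μ, X)}. Suppose that for every ε > 0 there exists an infinite collection {Bₙ} of pairwise disjoint measurable sets of positive measure such that ‖f(t)‖ > 1 - ε/2 for all t ∈ Bₙ and all n. Then f is a Daugavet point: for every ε > 0, the unit ball of L_∞(μ, X) equals the closed convex hull of {g ∈ B : ‖f - g‖ ≥ 2 - ε}. -/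
open Metric Set Filter MeasureTheory
open scoped ENNReal NNReal

lemma Lp_coeFn_sum {Ω : Type*} [MeasurableSpace Ω] {μ : Measure Ω}
    {X : Type*} [NormedAddCommGroup X] (s : Finset ℕ) (g : ℕ → Lp X ⊤ μ) :
    (↑↑(∑ i ∈ s, g i) : Ω → X) =ᵐ[μ] fun t => ∑ i ∈ s, (↑↑(g i) : Ω → X) t := by
  classical
  induction s using Finset.induction_on with
  | empty =>
    simp only [Finset.sum_empty]
    exact MeasureTheory.Lp.coeFn_zero (E := X) (p := ⊤) (μ := μ)
  | @insert a s' hx ih =>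
    rw [Finset.sum_insert hx]
    filter_upwards [MeasureTheory.Lp.coeFn_add (g a) (∑ i ∈ s', g i), ih] with t h1 h2
    rw [Finset.sum_insert hx, h1, Pi.add_apply, h2]

/-- If `f ∈ S_{L_∞(μ, X)}` is such that for every `ε > 0` there are infinitely many pairwise
disjoint measurable sets of positive measure on which `‖f‖ > 1 - ε/2`, then `f` is a Daugavet
point: for every `ε > 0`, the unit ball equals the closed convex hull of
`{g ∈ B : ‖f - g‖ ≥ 2 - ε}`. -/
theorem daugavet_Linfty {Ω : Type*} [MeasurableSpace Ω] {μ : MeasureTheory.Measure Ω}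
    {X : Type*} [NormedAddCommGroup X] [NormedSpace ℝ X] [CompleteSpace X]
    (f : MeasureTheory.Lp X ⊤ μ) (hf : ‖f‖ = 1)
    (h : ∀ ε > (0:ℝ), ∃ B : ℕ → Set Ω, (∀ n, MeasurableSet (B n)) ∧
      Pairwise (Function.onFun Disjoint B) ∧ (∀ n, 0 < μ (B n)) ∧
      ∀ n, ∀ t ∈ B n, 1 - ε / 2 < ‖(f : Ω → X) t‖) :
    ∀ ε > (0:ℝ), Metric.closedBall (0 : MeasureTheory.Lp X ⊤ μ) 1 =
      closure (convexHull ℝ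
        {g | g ∈ Metric.closedBall (0 : MeasureTheory.Lp X ⊤ μ) 1 ∧ 2 - ε ≤ ‖f - g‖}) := by
  classical
  intro ε hε
  obtain ⟨B, hBmeas, hBdisj, hBpos, hBf⟩ := h ε hε
  set Δ : Set (Lp X ⊤ μ) :=
    {g | g ∈ Metric.closedBall (0 : Lp X ⊤ μ) 1 ∧ 2 - ε ≤ ‖f - g‖} with hΔ
  -- a.e. bound on f
  have hFbd : ∀ᵐ t ∂μ, ‖(↑↑f : Ω → X) t‖ ≤ 1 := by
    have h1 : eLpNormEssSup (↑↑f : Ω → X) μ = 1 := by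
      have := MeasureTheory.Lp.norm_def f
      rw [hf] at this
      rw [eLpNorm_exponent_top] at this
      have hne : eLpNormEssSup (↑↑f : Ω → X) μ ≠ ⊤ := by
        have := MeasureTheory.Lp.eLpNorm_ne_top f
        rwa [eLpNorm_exponent_top] at this
      rw [← ENNReal.ofReal_toReal hne, ← this]
      norm_num
    filter_upwards [MeasureTheory.ae_le_eLpNormEssSup (f := (↑↑f : Ω → X)) (μ := μ)] with t ht
    rw [h1, ← ofReal_norm_eq_enorm] at ht
    exact ENNReal.ofReal_le_one.mp ht
  apply le_antisymm ?_ ?_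
  · -- closedBall ⊆ closure (convexHull Δ)
    intro h0 hh0
    have hHbd : ∀ᵐ t ∂μ, ‖(↑↑h0 : Ω → X) t‖ ≤ 1 := by
      have hn : ‖h0‖ ≤ 1 := by simpa [mem_closedBall, dist_zero_right] using hh0
      have hle : eLpNormEssSup (↑↑h0 : Ω → X) μ ≤ 1 := by
        have h2 := MeasureTheory.Lp.norm_def h0
        rw [eLpNorm_exponent_top] at h2
        have hne : eLpNormEssSup (↑↑h0 : Ω → X) μ ≠ ⊤ := by
          have := MeasureTheory.Lp.eLpNorm_ne_top h0
          rwa [eLpNorm_exponent_top] at this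
        rw [← ENNReal.ofReal_toReal hne, ← h2]
        exact_mod_cast ENNReal.ofReal_le_ofReal (h2 ▸ hn)
      filter_upwards [MeasureTheory.ae_le_eLpNormEssSup (f := (↑↑h0 : Ω → X)) (μ := μ)] with t ht
      have := le_trans ht hle
      rw [← ofReal_norm_eq_enorm] at this
      exact ENNReal.ofReal_le_one.mp this
    rw [Metric.mem_closure_iff]
    intro δ hδ
    obtain ⟨k, hk⟩ := exists_nat_gt (2 / δ)
    have hkpos : 0 < (k : ℝ) := lt_trans (by positivity) hk
    have hk0 : (k : ℝ) ≠ 0 := ne_of_gt hkpos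
    -- define the functions G i
    set F : Ω → X := (↑↑f : Ω → X) with hF
    set H : Ω → X := (↑↑h0 : Ω → X) with hH
    set G : ℕ → Ω → X := fun i t => if t ∈ B i then -F t else H t with hG
    have hGmem : ∀ i, MemLp (G i) ⊤ μ := by
      intro i
      have heq : G i = fun t => H t + (B i).indicator (fun s => -F s - H s) t := by
        funext t
        by_cases ht : t ∈ B i
        · simp [hG, ht, Set.indicator_of_mem ht]
        · simp [hG, ht, Set.indicator_of_notMem ht]
      rw [heq]
      exact ((Lp.memLp h0).add
        (((Lp.memLp f).neg.sub (Lp.memLp h0)).indicator (hBmeas i)))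
    set g : ℕ → Lp X ⊤ μ := fun i => (hGmem i).toLp (G i) with hg
    -- each g i lies in Δ
    have hgΔ : ∀ i, g i ∈ Δ := by
      intro i
      constructor
      · -- norm ≤ 1
        rw [mem_closedBall, dist_zero_right, hg, MeasureTheory.Lp.norm_toLp]
        have hb : ∀ᵐ t ∂μ, ‖G i t‖ ≤ 1 := by
          filter_upwards [hFbd, hHbd] with t h1 h2
          by_cases ht : t ∈ B i <;> simp [hG, ht, h1, h2]
        have := eLpNormEssSup_le_of_ae_bound (C := 1) hb
        rw [eLpNorm_exponent_top]
        calc (eLpNormEssSup (G i) μ).toReal ≤ (ENNReal.ofReal 1).toReal :=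
              ENNReal.toReal_mono (by simp) this
          _ = 1 := by simp
      · -- 2 - ε ≤ ‖f - g i‖
        by_contra hlt
        push_neg at hlt
        have h2εpos : 0 < 2 - ε := lt_of_le_of_lt (norm_nonneg _) hlt
        have hes : eLpNormEssSup (↑↑(f - g i) : Ω → X) μ < ENNReal.ofReal (2 - ε) := by
          have hnd := MeasureTheory.Lp.norm_def (f - g i)
          rw [eLpNorm_exponent_top] at hnd
          have hne : eLpNormEssSup (↑↑(f - g i) : Ω → X) μ ≠ ⊤ := by
            have := MeasureTheory.Lp.eLpNorm_ne_top (f - g i)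
            rwa [eLpNorm_exponent_top] at this
          rw [← ENNReal.ofReal_toReal hne, ← hnd]
          exact (ENNReal.ofReal_lt_ofReal_iff_of_nonneg (norm_nonneg _)).mpr hlt
        have hae : ∀ᵐ t ∂μ, ‖(↑↑(f - g i) : Ω → X) t‖ < 2 - ε := by
          rw [eLpNormEssSup] at hes
          have hbdd : Filter.IsBoundedUnder (· ≤ ·) (ae μ)
              (fun t => (‖(↑↑(f - g i) : Ω → X) t‖₊ : ℝ≥0∞)) :=
            Filter.isBoundedUnder_of ⟨⊤, fun _ => le_top⟩
          have h3 := ae_lt_of_essSup_lt hes hbdd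
          filter_upwards [h3] with t ht
          have := (ENNReal.lt_ofReal_iff_toReal_lt (by simp)).mp ht
          simpa using this
        have hae2 : ∀ᵐ t ∂μ, (↑↑(f - g i) : Ω → X) t = F t - G i t := by
          filter_upwards [MeasureTheory.Lp.coeFn_sub f (g i), (hGmem i).coeFn_toLp] with t h1 h2
          rw [h1, Pi.sub_apply, h2]
        have hnull : μ (B i) = 0 := by
          have hss : ∀ᵐ t ∂μ, t ∉ B i := by
            filter_upwards [hae, hae2] with t h1 h2 ht
            rw [h2] at h1
            have hGt : G i t = -F t := by simp [hG, ht]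
            rw [hGt, sub_neg_eq_add, ← two_smul ℝ] at h1
            rw [norm_smul] at h1
            have := hBf i t ht
            simp only [Real.norm_ofNat] at h1
            linarith
          exact measure_eq_zero_iff_ae_notMem.mpr hss
        exact absurd hnull (ne_of_gt (hBpos i))
    -- the average
    set gbar : Lp X ⊤ μ := (k : ℝ)⁻¹ • ∑ i ∈ Finset.range k, g i with hgbar
    have hgbar_mem : gbar ∈ convexHull ℝ Δ := by
      rw [hgbar, Finset.smul_sum]
      refine (convex_convexHull ℝ Δ).sum_mem (fun i _ => by positivity) ?_
        (fun i _ => subset_convexHull ℝ Δ (hgΔ i))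
      rw [Finset.sum_const, Finset.card_range, nsmul_eq_mul, mul_inv_cancel₀ hk0]
    -- distance estimate
    have hdist : ‖h0 - gbar‖ ≤ 2 / k := by
      have hptwise : ∀ᵐ t ∂μ, ‖(↑↑(h0 - gbar) : Ω → X) t‖ ≤ 2 / k := by
        filter_upwards [MeasureTheory.Lp.coeFn_sub h0 gbar,
          MeasureTheory.Lp.coeFn_smul ((k : ℝ)⁻¹) (∑ i ∈ Finset.range k, g i),
          Lp_coeFn_sum (Finset.range k) g,
          (ae_all_iff.mpr (fun i => (hGmem i).coeFn_toLp)),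
          hFbd, hHbd] with t h1 h2 h3 h4 h5 h6
        rw [h1, Pi.sub_apply, h2, Pi.smul_apply, h3]
        have hrw : ∀ i ∈ Finset.range k, (↑↑(g i) : Ω → X) t = G i t := fun i _ => h4 i
        rw [Finset.sum_congr rfl hrw]
        have key : H t - (k : ℝ)⁻¹ • ∑ i ∈ Finset.range k, G i t
            = (k : ℝ)⁻¹ • ∑ i ∈ Finset.range k, (H t - G i t) := by
          rw [Finset.sum_sub_distrib, Finset.sum_const, Finset.card_range, smul_sub,
            ← Nat.cast_smul_eq_nsmul ℝ, inv_smul_smul₀ hk0]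
        rw [key, norm_smul]
        have hsum : ‖∑ i ∈ Finset.range k, (H t - G i t)‖ ≤ 2 := by
          by_cases hex : ∃ j ∈ Finset.range k, t ∈ B j
          · obtain ⟨j, hjk, hjt⟩ := hex
            have : ∑ i ∈ Finset.range k, (H t - G i t) = H t - G j t := by
              refine Finset.sum_eq_single_of_mem j hjk (fun i _ hij => ?_)
              have hti : t ∉ B i := fun hti =>
                (hBdisj hij).le_bot ⟨hti, hjt⟩
              simp [hG, hti]
            rw [this]
            have : G j t = -F t := by simp [hG, hjt]
            rw [this, sub_neg_eq_add]
            calc ‖H t + F t‖ ≤ ‖H t‖ + ‖F t‖ := norm_add_le _ _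
              _ ≤ 2 := by linarith
          · push_neg at hex
            have : ∀ i ∈ Finset.range k, H t - G i t = 0 := by
              intro i hi
              simp [hG, hex i hi]
            rw [Finset.sum_eq_zero this]
            simp
        calc ‖(k:ℝ)⁻¹‖ * ‖∑ i ∈ Finset.range k, (H t - G i t)‖
            ≤ (k:ℝ)⁻¹ * 2 := by
              rw [Real.norm_eq_abs, abs_of_pos (by positivity)]
              exact mul_le_mul_of_nonneg_left hsum (by positivity)
          _ = 2 / k := by ring
      have hle := eLpNormEssSup_le_of_ae_bound (C := 2 / k) hptwise
      rw [MeasureTheory.Lp.norm_def, eLpNorm_exponent_top]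
      exact ENNReal.toReal_le_of_le_ofReal (by positivity) hle
    refine ⟨gbar, hgbar_mem, ?_⟩
    rw [dist_eq_norm]
    calc ‖h0 - gbar‖ ≤ 2 / k := hdist
      _ < δ := by
        rw [div_lt_iff₀ hkpos]
        have h2 := (div_lt_iff₀ hδ).mp hk
        linarith
  · -- closure (convexHull Δ) ⊆ closedBall
    refine closure_minimal ?_ Metric.isClosed_closedBall
    refine convexHull_min ?_ (convex_closedBall 0 1)
    exact fun g hg => hg.1
end
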